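/- arXiv:2409.06969 — 4 statements merged into one kernel-verified Lean document; each statement's English description precedes it below -/
import Mathlib

section
/- Let G be a chestnut and let m_0,m_1,…,m_ℓ with ℓ≥1 be a path from an exterior node m_0=e to a node m_ℓ lying on the cycle of G, with m_0,…,m_{ℓ-1} not on the cycle. Then the last edge of this path has weight 1, i.e. w(m_{ℓ-1},m_ℓ)=1, and the two cycle edges incident with m_ℓ have weights 2 and 1 respectively. -/
/- Formalization of multi-soliton automata (Bordihn–Schulz),
   following the definitions of the paper. -/

namespace Soliton

variable {V : Type}

/-- An undirected, loopless graph on node set `V`. -/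
structure SGraph (V : Type) where
  adj : V → V → Prop
  symm : ∀ u v, adj u v → adj v u
  loopless : ∀ v, ¬ adj v v

/-- Degree of a node: the number of neighbours. -/
noncomputable def degree (G : SGraph V) (n : V) : ℕ := Nat.card {v // G.adj n v}

/-- An exterior node has degree 1. -/
def Exterior (G : SGraph V) (n : V) : Prop := degree G n = 1

/-- An interior node has degree at least 2. -/
def Interior (G : SGraph V) (n : V) : Prop := 2 ≤ degree G n

/-- A weight function: symmetric, with weight in {1,2} exactly on edges and 0 elsewhere. -/
def IsWeighting (G : SGraph V) (w : V → V → ℕ) : Prop :=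
  (∀ u v, w u v = w v u) ∧
  (∀ u v, G.adj u v → w u v = 1 ∨ w u v = 2) ∧
  (∀ u v, ¬ G.adj u v → w u v = 0)

/-- The weight of a node: sum of the weights of the incident edges. -/
noncomputable def nodeWeight (w : V → V → ℕ) (n : V) : ℕ := ∑ᶠ v, w n v

/-- A soliton graph: degrees between 1 and 3, node-weight conditions, and every
component contains an exterior node. -/
def IsSolitonGraph (G : SGraph V) (w : V → V → ℕ) : Prop :=
  IsWeighting G w ∧
  (∀ n, 1 ≤ degree G n ∧ degree G n ≤ 3) ∧
  (∀ n, Exterior G n → nodeWeight w n = 1 ∨ nodeWeight w n = 2) ∧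
  (∀ n, Interior G n → nodeWeight w n = degree G n + 1) ∧
  (∀ n, ∃ e, Exterior G e ∧ Relation.ReflTransGen G.adj n e)

/-- A burst `(n₁,n₁')‖_{k₁}(n₂,n₂')‖_{k₂}⋯(n_m,n_m')⊥`: each soliton `i` has an
entry node, an exit node, and a delay (the delay of the first soliton is 0). -/
structure Burst (V : Type) where
  m : ℕ
  hm : 0 < m
  entry : Fin m → V
  exit : Fin m → V
  delay : Fin m → ℕ
  delay_zero : delay ⟨0, hm⟩ = 0

/-- A burst for a soliton graph: all entry and exit nodes are exterior. -/
def IsBurstFor (G : SGraph V) (b : Burst V) : Prop :=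
  ∀ i, Exterior G (b.entry i) ∧ Exterior G (b.exit i)

/-- The arrival time of soliton `i`: the sum of the delays up to and including `i`. -/
def Burst.arrival (b : Burst V) (i : Fin b.m) : ℕ :=
  ∑ j ∈ Finset.univ.filter (fun j => j ≤ i), b.delay j

/-- The position of a soliton: `wait k` with `k ≥ 1` means `k` steps until entry,
`wait 0` means the soliton has left the graph, and `node n` means it is at node `n`. -/
inductive SolPos (V : Type) where
  | wait : ℕ → SolPos V
  | node : V → SolPos V

/-- The initial position map of a burst. -/
def initPos (b : Burst V) : Fin b.m → SolPos V := fun i =>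
  if b.arrival i = 0 then SolPos.node (b.entry i) else SolPos.wait (b.arrival i)

/-- A position map is final if every soliton has left the graph. -/
def IsFinal {m : ℕ} (π : Fin m → SolPos V) : Prop := ∀ i, π i = SolPos.wait 0

/-- A configuration: a weighting of the graph together with a position map. -/
abbrev Config (V : Type) (m : ℕ) := (V → V → ℕ) × (Fin m → SolPos V)

/-- The one-step (potential successor) relation on the position of a single soliton:
waiting counters decrease, soliton `i` enters at its entry node, a soliton in the
graph moves to an adjacent node, and a soliton may leave only at its exit node. -/
def PosStep (G : SGraph V) (b : Burst V) (i : Fin b.m) (p p' : SolPos V) : Prop :=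
  (p = SolPos.wait 0 ∧ p' = SolPos.wait 0) ∨
  (p = SolPos.wait 1 ∧ p' = SolPos.node (b.entry i)) ∨
  (∃ k : ℕ, p = SolPos.wait (k + 2) ∧ p' = SolPos.wait (k + 1)) ∨
  (∃ n : V, p = SolPos.node n ∧
    ((n = b.exit i ∧ p' = SolPos.wait 0) ∨ (∃ n', G.adj n n' ∧ p' = SolPos.node n')))

/-- Some soliton moves from `p` to `q` in the step from `π` to `π'`. -/
def MovesAlong {m : ℕ} (π π' : Fin m → SolPos V) (p q : V) : Prop :=
  ∃ i, π i = SolPos.node p ∧ π' i = SolPos.node q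

/-- The weight of a traversed edge changes from `w` to `3 - w`; all other
weights remain unchanged. -/
def WeightStep {m : ℕ} (w w' : V → V → ℕ) (π π' : Fin m → SolPos V) : Prop :=
  ∀ p q : V,
    ((MovesAlong π π' p q ∨ MovesAlong π π' q p) → w' p q = 3 - w p q) ∧
    (¬(MovesAlong π π' p q ∨ MovesAlong π π' q p) → w' p q = w p q)

/-- A single step between configurations. -/
def StepOk (G : SGraph V) (b : Burst V) (c c' : Config V b.m) : Prop :=
  (∀ i, PosStep G b i (c.2 i) (c'.2 i)) ∧ WeightStep c.1 c'.1 c.2 c'.2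

/-- The conditions of a configuration trail involving two consecutive steps
`c, c', c''`: a soliton that has just entered moves on into the graph; a soliton
reaching its exit node from inside the graph leaves; consecutive edges traversed
by a soliton have alternating weights; a soliton never immediately turns around. -/
def TwoStepOk (G : SGraph V) (b : Burst V) (c c' c'' : Config V b.m) : Prop :=
  ∀ i : Fin b.m,
    (∀ n : V, c'.2 i = SolPos.node n → Exterior G n → c.2 i = SolPos.wait 1 →
      ∃ r, c''.2 i = SolPos.node r) ∧
    (c'.2 i = SolPos.node (b.exit i) → Exterior G (b.exit i) →
      (∃ p, c.2 i = SolPos.node p) → c''.2 i = SolPos.wait 0) ∧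
    (∀ p q r : V, c.2 i = SolPos.node p → c'.2 i = SolPos.node q → Interior G q →
      c''.2 i = SolPos.node r → c.1 p q ≠ c'.1 q r) ∧
    (c''.2 i ≠ SolPos.wait 0 → c''.2 i ≠ c'.2 i ∧ c''.2 i ≠ c.2 i)

/-- A configuration trail for a soliton graph with weighting `w0` and a burst `b`. -/
def IsTrail (G : SGraph V) (w0 : V → V → ℕ) (b : Burst V) (len : ℕ)
    (cfg : Fin (len + 1) → Config V b.m) : Prop :=
  (cfg 0).1 = w0 ∧ (cfg 0).2 = initPos b ∧
  (∀ (j : ℕ) (h : j < len), StepOk G b (cfg ⟨j, by omega⟩) (cfg ⟨j + 1, by omega⟩)) ∧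
  (∀ (h : 1 ≤ len) (i : Fin b.m) (n : V), (cfg 0).2 i = SolPos.node n →
    ∃ n', (cfg ⟨1, by omega⟩).2 i = SolPos.node n') ∧
  (∀ (j : ℕ) (h : j + 2 ≤ len),
    TwoStepOk G b (cfg ⟨j, by omega⟩) (cfg ⟨j + 1, by omega⟩) (cfg ⟨j + 2, by omega⟩)) ∧
  (∀ (j : ℕ) (h : j < len), ¬ IsFinal (cfg ⟨j, by omega⟩).2)

/-- The legality conditions between two consecutive configurations: two solitons
at the same node move to different nodes, and two solitons never traverse the
same edge in opposite directions in the same step. -/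
def LegalStep {m : ℕ} (G : SGraph V) (c c' : Config V m) : Prop :=
  (∀ i i' : Fin m, i ≠ i' → ∀ n : V, c.2 i = SolPos.node n → c.2 i' = SolPos.node n →
    c'.2 i ≠ c'.2 i') ∧
  (∀ i i' : Fin m, i ≠ i' → ∀ p q : V, c.2 i = SolPos.node p → c.2 i' = SolPos.node q →
    G.adj p q → ¬(c'.2 i = SolPos.node q ∧ c'.2 i' = SolPos.node p))

/-- A legal configuration trail. -/
def IsLegalTrail (G : SGraph V) (w0 : V → V → ℕ) (b : Burst V) (len : ℕ)
    (cfg : Fin (len + 1) → Config V b.m) : Prop :=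
  IsTrail G w0 b len cfg ∧
  ∀ (j : ℕ) (h : j < len), LegalStep G (cfg ⟨j, by omega⟩) (cfg ⟨j + 1, by omega⟩)

/-- A total legal configuration trail: a legal trail whose last position map is final. -/
def IsTotalLegalTrail (G : SGraph V) (w0 : V → V → ℕ) (b : Burst V) (len : ℕ)
    (cfg : Fin (len + 1) → Config V b.m) : Prop :=
  IsLegalTrail G w0 b len cfg ∧ IsFinal (cfg (Fin.last len)).2

/-- `Result(G, b)`: the set of weightings obtained as final graphs of total legal
configuration trails for `(G, w0)` and `b`. -/
def ResultSet (G : SGraph V) (w0 : V → V → ℕ) (b : Burst V) : Set (V → V → ℕ) :=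
  {w' | ∃ (len : ℕ) (cfg : Fin (len + 1) → Config V b.m),
    IsTotalLegalTrail G w0 b len cfg ∧ (cfg (Fin.last len)).1 = w'}

/-- `States(G, B)`: the closure of `{w0}` under taking results of bursts in `B`. -/
inductive InStates (G : SGraph V) (w0 : V → V → ℕ) (B : Set (Burst V)) :
    (V → V → ℕ) → Prop
  | refl : InStates G w0 B w0
  | step {w' w'' : V → V → ℕ} {b : Burst V} (h : InStates G w0 B w') (hb : b ∈ B)
      (hr : w'' ∈ ResultSet G w' b) : InStates G w0 B w''

/-- `States(G, B)` as a set. -/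
def StatesSet (G : SGraph V) (w0 : V → V → ℕ) (B : Set (Burst V)) :
    Set (V → V → ℕ) := {w' | InStates G w0 B w'}

/-- The data of a configuration trail: a length together with a sequence of
configurations. -/
def TrailData (V : Type) (m : ℕ) := Σ len : ℕ, Fin (len + 1) → Config V m

/-- The trail data is a total legal configuration trail. -/
def IsTotalLegalTrailD (G : SGraph V) (w0 : V → V → ℕ) (b : Burst V)
    (t : TrailData V b.m) : Prop :=
  IsTotalLegalTrail G w0 b t.1 t.2

/-- The soliton automaton `A_B(G)` is strongly deterministic: for every state and
burst there is at most one total legal configuration trail. -/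
def StronglyDet (G : SGraph V) (w0 : V → V → ℕ) (B : Set (Burst V)) : Prop :=
  ∀ w', InStates G w0 B w' → ∀ b ∈ B, ∀ t t' : TrailData V b.m,
    IsTotalLegalTrailD G w' b t → IsTotalLegalTrailD G w' b t' → t = t'

/-- The prefix of length `i` of a sequence of configurations. -/
def prefixCfg {α : Type} {len : ℕ} (cfg : Fin (len + 1) → α) (i : ℕ) (h : i ≤ len) :
    Fin (i + 1) → α := fun j => cfg ⟨j, by have := j.isLt; omega⟩

/-- `SC(C)`: the set of position maps by which the configuration trail `C` can be
extended by one configuration. -/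
def SC (G : SGraph V) (w0 : V → V → ℕ) (b : Burst V) (len : ℕ)
    (cfg : Fin (len + 1) → Config V b.m) : Set (Fin b.m → SolPos V) :=
  {π' | ∃ wn : V → V → ℕ, IsTrail G w0 b (len + 1) (Fin.snoc cfg (wn, π'))}

/-- A configuration trail is perfect if no two of its configurations at distinct
positions are successor-equivalent (equal as configurations with equal sets of
possible successor position maps). -/
def IsPerfect (G : SGraph V) (w0 : V → V → ℕ) (b : Burst V) (len : ℕ)
    (cfg : Fin (len + 1) → Config V b.m) : Prop :=
  ∀ (i j : ℕ) (hij : i < j) (hj : j ≤ len),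
    ¬(cfg ⟨i, by omega⟩ = cfg ⟨j, by omega⟩ ∧
      SC G w0 b i (prefixCfg cfg i (by omega)) = SC G w0 b j (prefixCfg cfg j hj))

/-- The trail data is a perfect configuration trail. -/
def IsPerfectD (G : SGraph V) (w0 : V → V → ℕ) (b : Burst V)
    (t : TrailData V b.m) : Prop :=
  IsPerfect G w0 b t.1 t.2

/-- The soliton automaton `A_B(G)` is perfectly deterministic: for every state and
burst there is at most one perfect total legal configuration trail. -/
def PerfectlyDet (G : SGraph V) (w0 : V → V → ℕ) (B : Set (Burst V)) : Prop :=
  ∀ w', InStates G w0 B w' → ∀ b ∈ B, ∀ t t' : TrailData V b.m,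
    IsTotalLegalTrailD G w' b t → IsPerfectD G w' b t →
    IsTotalLegalTrailD G w' b t' → IsPerfectD G w' b t' → t = t'

/-- `g` is an upper bound on the amount of non-determinism of `A_B(G)`. -/
def DegreeBound (G : SGraph V) (w0 : V → V → ℕ) (B : Set (Burst V)) (g : ℕ) : Prop :=
  ∀ w', InStates G w0 B w' → ∀ b ∈ B, (ResultSet G w' b).ncard ≤ g

/-- The degree of non-determinism of `A_B(G)` is `g`: the smallest integer `g ≥ 1`
with `|Result(G', b)| ≤ g` for all states `G'` and bursts `b ∈ B`. -/
def HasDegreeOfNondeterminism (G : SGraph V) (w0 : V → V → ℕ) (B : Set (Burst V))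
    (g : ℕ) : Prop :=
  1 ≤ g ∧ DegreeBound G w0 B g ∧ ∀ g', 1 ≤ g' → DegreeBound G w0 B g' → g ≤ g'

/-- The edge `(u, v)` is used (in this direction) in the configuration trail `cfg`. -/
def UsedInTrail {m : ℕ} (len : ℕ) (cfg : Fin (len + 1) → Config V m) (u v : V) : Prop :=
  ∃ (j : ℕ) (h : j < len) (i : Fin m),
    (cfg ⟨j, by omega⟩).2 i = SolPos.node u ∧ (cfg ⟨j + 1, by omega⟩).2 i = SolPos.node v

/-- An indecomposable soliton graph: it contains no impervious path, i.e. every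
edge is used in some configuration trail of some state reachable with some set
of bursts. -/
def Indecomposable (G : SGraph V) (w0 : V → V → ℕ) : Prop :=
  ∀ u v, G.adj u v →
    ∃ B : Set (Burst V), (∀ b ∈ B, IsBurstFor G b) ∧
      ∃ w', InStates G w0 B w' ∧ ∃ b ∈ B, ∃ (len : ℕ) (cfg : Fin (len + 1) → Config V b.m),
        IsTrail G w' b len cfg ∧ (UsedInTrail len cfg u v ∨ UsedInTrail len cfg v u)

/-- Walks of a given length in a graph. -/
inductive WalkLen (G : SGraph V) : V → V → ℕ → Prop
  | refl (v : V) : WalkLen G v v 0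
  | tail {u v x : V} {n : ℕ} : WalkLen G u v n → G.adj v x → WalkLen G u x (n + 1)

/-- The graph is connected. -/
def ConnectedG (G : SGraph V) : Prop := ∀ u v, Relation.ReflTransGen G.adj u v

/-- The edge `(u, v)` is a bridge: removing it disconnects `u` from `v`. -/
def IsBridge (G : SGraph V) (u v : V) : Prop :=
  ¬ Relation.ReflTransGen (fun a c => G.adj a c ∧ ¬((a = u ∧ c = v) ∨ (a = v ∧ c = u))) u v

/-- The underlying graph is a tree: connected and every edge is a bridge. -/
def IsTreeG (G : SGraph V) : Prop := ConnectedG G ∧ ∀ u v, G.adj u v → IsBridge G u v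

/-- `(u, v)` is an edge of the cycle `cyc`. -/
def CycleEdge {L : ℕ} (cyc : ZMod (2 * L) → V) (u v : V) : Prop :=
  ∃ t, (u = cyc t ∧ v = cyc (t + 1)) ∨ (v = cyc t ∧ u = cyc (t + 1))

/-- The distance from a node to the cycle. -/
noncomputable def distToCycle (G : SGraph V) {L : ℕ} (cyc : ZMod (2 * L) → V)
    (n : V) : ℕ :=
  sInf {d | ∃ t, WalkLen G n (cyc t) d}

/-- A chestnut with distinguished cycle `cyc` of even length `2L`: an
indecomposable soliton graph consisting of a single cycle of even length
together with paths leading into it, such that entry points of different paths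
(nodes of degree 3 on the cycle) are at even distance along the cycle, and paths
leading to the cycle meet (at nodes of degree 3 off the cycle) only at even
distance from their entry into the cycle. -/
def IsChestnutWith (G : SGraph V) (w : V → V → ℕ) (L : ℕ)
    (cyc : ZMod (2 * L) → V) : Prop :=
  IsSolitonGraph G w ∧ Indecomposable G w ∧ 2 ≤ L ∧
  Function.Injective cyc ∧ (∀ t, G.adj (cyc t) (cyc (t + 1))) ∧ ConnectedG G ∧
  (∀ u v, G.adj u v → ¬ CycleEdge cyc u v → IsBridge G u v) ∧
  (∀ s t : ZMod (2 * L), degree G (cyc s) = 3 → degree G (cyc t) = 3 →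
    ∃ d, t = s + 2 * d) ∧
  (∀ n, (∀ t, n ≠ cyc t) → degree G n = 3 → Even (distToCycle G cyc n))

/-- A chestnut. -/
def IsChestnut (G : SGraph V) (w : V → V → ℕ) : Prop :=
  ∃ (L : ℕ) (cyc : ZMod (2 * L) → V), IsChestnutWith G w L cyc

/-- The burst `(x, y)⊥` of length 1. -/
def singleBurst (x y : V) : Burst V :=
  { m := 1, hm := one_pos, entry := fun _ => x, exit := fun _ => y,
    delay := fun _ => 0, delay_zero := rfl }

/-- The burst `(e, e)‖₁(e, e)⊥` of length 2: two solitons enter and exit at `e`,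
the second entering one time step after the first. -/
def doubleBurst (e : V) : Burst V :=
  { m := 2, hm := two_pos, entry := fun _ => e, exit := fun _ => e,
    delay := fun i => if (i : ℕ) = 0 then 0 else 1, delay_zero := rfl }


section Helpers
open Classical in
lemma degree_eq_card [Fintype V] (G : SGraph V) (n : V) :
    degree G n = (Finset.univ.filter (G.adj n)).card := by
  simp [degree, Nat.card_eq_fintype_card, Fintype.card_subtype]

open Classical in
lemma nodeWeight_eq_filter_sum [Fintype V] (G : SGraph V) (w : V → V → ℕ)
    (hw : IsWeighting G w) (n : V) :
    nodeWeight w n = ∑ v ∈ Finset.univ.filter (G.adj n), w n v := by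
  rw [nodeWeight, finsum_eq_sum_of_fintype]
  refine (Finset.sum_filter_of_ne ?_).symm
  intro x _ hx
  by_contra h
  exact hx (hw.2.2 n x h)

open Classical in
lemma degree_ge_two [Fintype V] (G : SGraph V) (n a b : V) (hab : a ≠ b)
    (ha : G.adj n a) (hb : G.adj n b) : 2 ≤ degree G n := by
  rw [degree_eq_card]
  have hsub : ({a, b} : Finset V) ⊆ Finset.univ.filter (G.adj n) := by
    intro x hx
    simp only [Finset.mem_insert, Finset.mem_singleton] at hx
    rcases hx with rfl | rfl <;> simp [ha, hb]
  calc 2 = ({a, b} : Finset V).card := by rw [Finset.card_pair hab]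
    _ ≤ _ := Finset.card_le_card hsub

open Classical in
lemma degree_ge_three [Fintype V] (G : SGraph V) (n a b c : V) (hab : a ≠ b)
    (hac : a ≠ c) (hbc : b ≠ c)
    (ha : G.adj n a) (hb : G.adj n b) (hc : G.adj n c) : 3 ≤ degree G n := by
  rw [degree_eq_card]
  have hsub : ({a, b, c} : Finset V) ⊆ Finset.univ.filter (G.adj n) := by
    intro x hx
    simp only [Finset.mem_insert, Finset.mem_singleton] at hx
    rcases hx with rfl | rfl | rfl <;> simp [ha, hb, hc]
  calc 3 = ({a, b, c} : Finset V).card := by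
        rw [Finset.card_insert_of_notMem (by simp [hab, hac]),
          Finset.card_pair hbc]
    _ ≤ _ := Finset.card_le_card hsub

open Classical in
lemma nodeWeight_two [Fintype V] (G : SGraph V) (w : V → V → ℕ)
    (hw : IsWeighting G w) (n a b : V) (hab : a ≠ b)
    (ha : G.adj n a) (hb : G.adj n b) (hd : degree G n = 2) :
    nodeWeight w n = w n a + w n b := by
  rw [nodeWeight_eq_filter_sum G w hw]
  have hsub : ({a, b} : Finset V) ⊆ Finset.univ.filter (G.adj n) := by
    intro x hx
    simp only [Finset.mem_insert, Finset.mem_singleton] at hx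
    rcases hx with rfl | rfl <;> simp [ha, hb]
  have heq : Finset.univ.filter (G.adj n) = {a, b} := by
    refine (Finset.eq_of_subset_of_card_le hsub ?_).symm
    rw [Finset.card_pair hab, ← degree_eq_card, hd]
  rw [heq, Finset.sum_pair hab]

open Classical in
lemma nodeWeight_three [Fintype V] (G : SGraph V) (w : V → V → ℕ)
    (hw : IsWeighting G w) (n a b c : V) (hab : a ≠ b) (hac : a ≠ c) (hbc : b ≠ c)
    (ha : G.adj n a) (hb : G.adj n b) (hc : G.adj n c) (hd : degree G n = 3) :
    nodeWeight w n = w n a + w n b + w n c := by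
  rw [nodeWeight_eq_filter_sum G w hw]
  have hsub : ({a, b, c} : Finset V) ⊆ Finset.univ.filter (G.adj n) := by
    intro x hx
    simp only [Finset.mem_insert, Finset.mem_singleton] at hx
    rcases hx with rfl | rfl | rfl <;> simp [ha, hb, hc]
  have heq : Finset.univ.filter (G.adj n) = {a, b, c} := by
    refine (Finset.eq_of_subset_of_card_le hsub ?_).symm
    rw [Finset.card_insert_of_notMem (by simp [hab, hac]), Finset.card_pair hbc,
      ← degree_eq_card, hd]
  rw [heq, Finset.sum_insert (by simp [hab, hac]), Finset.sum_pair hbc, add_assoc]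

open Classical in
lemma third_neighbor [Fintype V] (G : SGraph V) (n a b : V) (hab : a ≠ b)
    (ha : G.adj n a) (hb : G.adj n b) (hd : degree G n = 3) :
    ∃ c, G.adj n c ∧ a ≠ c ∧ b ≠ c := by
  by_contra h
  push_neg at h
  have hsub : Finset.univ.filter (G.adj n) ⊆ ({a, b} : Finset V) := by
    intro x hx
    simp only [Finset.mem_filter] at hx
    simp only [Finset.mem_insert, Finset.mem_singleton]
    by_cases hxa : a = x
    · exact Or.inl hxa.symm
    · exact Or.inr (h x hx.2 hxa).symm
  have h1 := Finset.card_le_card hsub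
  rw [← degree_eq_card, hd] at h1
  have h2 := Finset.card_insert_le a ({b} : Finset V)
  simp at h2
  omega
end Helpers

/-- In a chestnut, if `m₀,…,m_ℓ` (`ℓ ≥ 1`) is a path from an exterior
node `m₀ = e` to a node `m_ℓ` on the cycle, with `m₀,…,m_{ℓ-1}` off the cycle,
then the last edge of the path has weight 1, and the two cycle edges incident
with `m_ℓ` have weights 2 and 1 respectively. -/
theorem chestnut_entry_edge_weight {V : Type} [Finite V]
    (G : SGraph V) (w : V → V → ℕ) (L : ℕ) (cyc : ZMod (2 * L) → V)
    (hch : IsChestnutWith G w L cyc)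
    (ℓ : ℕ) (hℓ : 1 ≤ ℓ) (m : Fin (ℓ + 1) → V) (e : V)
    (h0 : m 0 = e) (he : Exterior G e)
    (hadj : ∀ j : Fin ℓ, G.adj (m j.castSucc) (m j.succ))
    (hoff : ∀ j : Fin (ℓ + 1), (j : ℕ) < ℓ → ∀ t, m j ≠ cyc t)
    (s : ZMod (2 * L)) (hs : m (Fin.last ℓ) = cyc s) :
    w (m ⟨ℓ - 1, by omega⟩) (m (Fin.last ℓ)) = 1 ∧
    ((w (cyc s) (cyc (s + 1)) = 2 ∧ w (cyc s) (cyc (s - 1)) = 1) ∨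
     (w (cyc s) (cyc (s + 1)) = 1 ∧ w (cyc s) (cyc (s - 1)) = 2)) := by
  classical
  have _inst : Fintype V := Fintype.ofFinite V
  obtain ⟨hsol, hind, hL, hinj, hcycadj, hconn, hbr, hdist3, _⟩ := hch
  obtain ⟨hw, hdeg, hext, hint, _⟩ := hsol
  have weights : ∀ u v, G.adj u v → w u v = 1 ∨ w u v = 2 := hw.2.1
  have h2ne : (2 : ZMod (2 * L)) ≠ 0 := by
    have h : ¬ (2 * L ∣ 2) := by
      intro h
      have := Nat.le_of_dvd (by norm_num) h
      omega
    have := (ZMod.natCast_eq_zero_iff 2 (2 * L)).not.mpr h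
    simpa using this
  have hne_pm : ∀ t : ZMod (2 * L), cyc (t + 1) ≠ cyc (t - 1) := by
    intro t h
    have he := hinj h
    exact h2ne (by linear_combination he)
  have hadjm : ∀ t : ZMod (2 * L), G.adj (cyc t) (cyc (t - 1)) := by
    intro t
    have h := hcycadj (t - 1)
    rw [show t - 1 + 1 = t from by ring] at h
    exact G.symm _ _ h
  -- Local structure at a cycle node
  have step : ∀ t : ZMod (2 * L),
      (w (cyc (t - 1)) (cyc t) + w (cyc t) (cyc (t + 1)) = 3) ∨
      (w (cyc (t - 1)) (cyc t) = 1 ∧ w (cyc t) (cyc (t + 1)) = 1 ∧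
        degree G (cyc t) = 3) := by
    intro t
    have hab : cyc (t + 1) ≠ cyc (t - 1) := hne_pm t
    have hsymm : w (cyc t) (cyc (t - 1)) = w (cyc (t - 1)) (cyc t) := hw.1 _ _
    have hd2 : 2 ≤ degree G (cyc t) :=
      degree_ge_two G (cyc t) (cyc (t + 1)) (cyc (t - 1)) hab (hcycadj t) (hadjm t)
    have hd3 : degree G (cyc t) ≤ 3 := (hdeg (cyc t)).2
    have hnw : nodeWeight w (cyc t) = degree G (cyc t) + 1 := hint (cyc t) hd2
    have hA := weights _ _ (hcycadj t)
    have hB := weights _ _ (hadjm t)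
    rcases (show degree G (cyc t) = 2 ∨ degree G (cyc t) = 3 from by omega) with hcase | hcase
    · left
      have h2 := nodeWeight_two G w hw (cyc t) (cyc (t + 1)) (cyc (t - 1)) hab
        (hcycadj t) (hadjm t) hcase
      rw [hcase] at hnw
      rw [h2, hsymm] at hnw
      omega
    · obtain ⟨c, hc, hca, hcb⟩ := third_neighbor G (cyc t) (cyc (t + 1)) (cyc (t - 1))
        hab (hcycadj t) (hadjm t) hcase
      have h3 := nodeWeight_three G w hw (cyc t) (cyc (t + 1)) (cyc (t - 1)) c hab
        hca hcb (hcycadj t) (hadjm t) hc hcase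
      rw [hcase] at hnw
      rw [h3, hsymm] at hnw
      have hC := weights _ _ hc
      rcases (show w (cyc (t - 1)) (cyc t) + w (cyc t) (cyc (t + 1)) = 3 ∨
          (w (cyc (t - 1)) (cyc t) = 1 ∧ w (cyc t) (cyc (t + 1)) = 1) from by omega)
        with h | h
      · exact Or.inl h
      · exact Or.inr ⟨h.1, h.2, hcase⟩
  -- No "bad" node (both incident cycle edges of weight 1) exists
  have noBad : ∀ t : ZMod (2 * L),
      ¬ (w (cyc (t - 1)) (cyc t) = 1 ∧ w (cyc t) (cyc (t + 1)) = 1) := by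
    intro t0 hbad
    have deg3 : ∀ t : ZMod (2 * L), w (cyc (t - 1)) (cyc t) = 1 →
        w (cyc t) (cyc (t + 1)) = 1 → degree G (cyc t) = 3 := by
      intro t h1 h2
      rcases step t with h | h
      · omega
      · exact h.2.2
    have key : ∀ j : ℕ, (∀ i : ℕ, 1 ≤ i → i ≤ j →
        ¬ (w (cyc (t0 + (i : ℕ) - 1)) (cyc (t0 + (i : ℕ))) = 1 ∧
           w (cyc (t0 + (i : ℕ))) (cyc (t0 + (i : ℕ) + 1)) = 1)) →
        w (cyc (t0 + (j : ℕ))) (cyc (t0 + (j : ℕ) + 1)) =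
          if j % 2 = 0 then 1 else 2 := by
      intro j
      induction j with
      | zero => intro _; simpa using hbad.2
      | succ j ih =>
        intro hno
        have hj := ih (fun i h1 h2 => hno i h1 (by omega))
        have hnb := hno (j + 1) (by omega) le_rfl
        have e5 : ((j + 1 : ℕ) : ZMod (2 * L)) = ((j : ℕ) : ZMod (2 * L)) + 1 := by
          push_cast; ring
        have e6 : t0 + ((j : ℕ) : ZMod (2 * L)) + 1 - 1 = t0 + ((j : ℕ) : ZMod (2 * L)) := by
          ring
        rw [e5, ← add_assoc] at hnb ⊢
        rw [e6] at hnb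
        have hstep := step (t0 + ((j : ℕ) : ZMod (2 * L)) + 1)
        rw [e6] at hstep
        rcases hstep with h | h
        · by_cases hp : j % 2 = 0
          · rw [if_pos hp] at hj
            rw [if_neg (by omega)]
            omega
          · rw [if_neg hp] at hj
            rw [if_pos (by omega)]
            omega
        · exact absurd ⟨h.1, h.2.1⟩ hnb
    have hP2L : 1 ≤ 2 * L ∧
        (w (cyc (t0 + ((2 * L : ℕ) : ZMod (2 * L)) - 1)) (cyc (t0 + ((2 * L : ℕ) : ZMod (2 * L)))) = 1 ∧
         w (cyc (t0 + ((2 * L : ℕ) : ZMod (2 * L)))) (cyc (t0 + ((2 * L : ℕ) : ZMod (2 * L)) + 1)) = 1) := by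
      rw [ZMod.natCast_self]
      simpa using ⟨by omega, hbad⟩
    have hexP : ∃ k : ℕ, 1 ≤ k ∧
        (w (cyc (t0 + (k : ℕ) - 1)) (cyc (t0 + (k : ℕ))) = 1 ∧
         w (cyc (t0 + (k : ℕ))) (cyc (t0 + (k : ℕ) + 1)) = 1) := ⟨2 * L, hP2L⟩
    obtain ⟨k, hk1, hkbad1, hkbad2, hmin⟩ :
        ∃ k : ℕ, 1 ≤ k ∧
          w (cyc (t0 + (k : ℕ) - 1)) (cyc (t0 + (k : ℕ))) = 1 ∧
          w (cyc (t0 + (k : ℕ))) (cyc (t0 + (k : ℕ) + 1)) = 1 ∧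
          ∀ i : ℕ, 1 ≤ i → i < k →
            ¬ (w (cyc (t0 + (i : ℕ) - 1)) (cyc (t0 + (i : ℕ))) = 1 ∧
               w (cyc (t0 + (i : ℕ))) (cyc (t0 + (i : ℕ) + 1)) = 1) := by
      refine ⟨Nat.find hexP, (Nat.find_spec hexP).1, (Nat.find_spec hexP).2.1,
        (Nat.find_spec hexP).2.2, ?_⟩
      intro i h1 h2 hbadi
      exact Nat.find_min hexP h2 ⟨h1, hbadi⟩
    have hno : ∀ i : ℕ, 1 ≤ i → i ≤ k - 1 →
        ¬ (w (cyc (t0 + (i : ℕ) - 1)) (cyc (t0 + (i : ℕ))) = 1 ∧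
           w (cyc (t0 + (i : ℕ))) (cyc (t0 + (i : ℕ) + 1)) = 1) := by
      intro i h1 h2
      exact hmin i h1 (by omega)
    have hFk := key (k - 1) hno
    have ec : ((k - 1 : ℕ) : ZMod (2 * L)) = ((k : ℕ) : ZMod (2 * L)) - 1 := by
      rw [Nat.cast_sub hk1]; simp
    rw [ec, show t0 + (((k : ℕ) : ZMod (2 * L)) - 1) = t0 + (k : ℕ) - 1 from by ring,
      show t0 + ((k : ℕ) : ZMod (2 * L)) - 1 + 1 = t0 + (k : ℕ) from by ring] at hFk
    have hparity : (k - 1) % 2 = 0 := by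
      by_contra hp
      rw [if_neg hp] at hFk
      omega
    have hdA : degree G (cyc t0) = 3 := deg3 t0 hbad.1 hbad.2
    have hdB : degree G (cyc (t0 + (k : ℕ))) = 3 := deg3 _ hkbad1 hkbad2
    obtain ⟨d, hd⟩ := hdist3 t0 (t0 + (k : ℕ)) hdA hdB
    have hk2 : ((k : ℕ) : ZMod (2 * L)) = 2 * d := by
      have := hd
      rwa [add_right_inj] at this
    have hdvd2 : (2 : ℕ) ∣ 2 * L := ⟨L, rfl⟩
    have hkz : ((k : ℕ) : ZMod 2) = 0 := by
      have h1 : ((k : ℕ) : ZMod 2) = (ZMod.castHom hdvd2 (ZMod 2)) ((k : ℕ) : ZMod (2 * L)) :=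
        (map_natCast _ _).symm
      rw [h1, hk2, map_mul, map_ofNat]
      rw [show ((2 : ZMod 2)) = 0 from by decide, zero_mul]
    have hk2dvd : (2 : ℕ) ∣ k := (ZMod.natCast_eq_zero_iff k 2).mp hkz
    obtain ⟨c2, hc2⟩ := hk2dvd
    omega
  -- Assemble the conclusion at the entry node `cyc s`
  have hoffc : ∀ t, m ⟨ℓ - 1, by omega⟩ ≠ cyc t :=
    hoff ⟨ℓ - 1, by omega⟩ (show ℓ - 1 < ℓ from by omega)
  have hadjc : G.adj (m ⟨ℓ - 1, by omega⟩) (m (Fin.last ℓ)) := by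
    have h := hadj ⟨ℓ - 1, by omega⟩
    have e1 : Fin.castSucc (⟨ℓ - 1, by omega⟩ : Fin ℓ) = (⟨ℓ - 1, by omega⟩ : Fin (ℓ + 1)) := by
      apply Fin.ext; simp
    have e2 : Fin.succ (⟨ℓ - 1, by omega⟩ : Fin ℓ) = Fin.last ℓ := by
      apply Fin.ext; simp [Fin.last]; omega
    rw [e1, e2] at h
    exact h
  have hadjc2 : G.adj (cyc s) (m ⟨ℓ - 1, by omega⟩) := by
    rw [hs] at hadjc
    exact G.symm _ _ hadjc
  have hab : cyc (s + 1) ≠ cyc (s - 1) := hne_pm s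
  have hac : cyc (s + 1) ≠ m ⟨ℓ - 1, by omega⟩ := fun h => hoffc (s + 1) h.symm
  have hbc : cyc (s - 1) ≠ m ⟨ℓ - 1, by omega⟩ := fun h => hoffc (s - 1) h.symm
  have hdeg3 : degree G (cyc s) = 3 :=
    le_antisymm ((hdeg (cyc s)).2)
      (degree_ge_three G (cyc s) (cyc (s + 1)) (cyc (s - 1)) (m ⟨ℓ - 1, by omega⟩)
        hab hac hbc (hcycadj s) (hadjm s) hadjc2)
  have hnw : nodeWeight w (cyc s) = 4 := by
    have := hint (cyc s) (by rw [Interior, hdeg3]; omega)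
    rw [hdeg3] at this
    exact this
  have h3 := nodeWeight_three G w hw (cyc s) (cyc (s + 1)) (cyc (s - 1))
    (m ⟨ℓ - 1, by omega⟩) hab hac hbc (hcycadj s) (hadjm s) hadjc2 hdeg3
  rw [h3] at hnw
  have hA := weights _ _ (hcycadj s)
  have hB := weights _ _ (hadjm s)
  have hC := weights _ _ hadjc2
  have hNB := noBad s
  have hsymB : w (cyc (s - 1)) (cyc s) = w (cyc s) (cyc (s - 1)) := hw.1 _ _
  have hgoal1 : w (m ⟨ℓ - 1, by omega⟩) (m (Fin.last ℓ)) =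
      w (cyc s) (m ⟨ℓ - 1, by omega⟩) := by
    rw [hs, hw.1]
  rw [hgoal1]
  omega

end Soliton
end

section
/- Let G be a chestnut and let e be an exterior node of G. Then there exists a total legal configuration trail for G and the burst (e,e)⊥, in which the soliton enters at e, traverses the cycle of G exactly once, and leaves the graph again at e. -/
/- Formalization of multi-soliton automata (Bordihn–Schulz),
   following the definitions of the paper. -/

namespace Soliton

variable {V : Type}

/-!
The soliton enters at `e`, runs down a shortest path to the cycle, goes once around the cycle
and climbs back to `e`; node weights make this walk alternating. At a node of degree 2 the two
edges have weights 1 and 2, and at a node of degree 3 no two edges both have weight 2. Hence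
two consecutive cycle edges can both have weight 1 only at a node of degree 3. From such a node
the cycle weights would alternate 1, 2, 1, … all the way round (a second such node would lie at
odd distance, against the even spacing of degree-3 cycle nodes) and, the cycle being even,
would come back with weight 2; so the cycle weights alternate everywhere. On the path the
degree-3 nodes lie at even distance from the cycle, which forces the path edge at distance `i`
to have weight 1 for even `i` and 2 for odd `i`. Turning into the cycle along its weight-2 edge,
the soliton finishes the round on a weight-1 edge and finds the path edges flipped by its own
descent, so it climbs back alternating as well.
-/

section Graph

variable {G : SGraph V} {w : V → V → ℕ}

lemma Exterior.eq_of_adj {e a b : V} (he : Exterior G e) (ha : G.adj e a) (hb : G.adj e b) :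
    a = b :=
  have : Subsingleton {v // G.adj e v} := (Nat.card_eq_one_iff_unique.mp he).1
  congrArg Subtype.val (Subsingleton.elim (⟨a, ha⟩ : {v // G.adj e v}) ⟨b, hb⟩)

lemma IsSolitonGraph.weight_add_weight (hsol : IsSolitonGraph G w) {n a b : V}
    (ha : G.adj n a) (hb : G.adj n b) (hab : a ≠ b) :
    w n a + w n b = 3 ∨ (w n a + w n b = 2 ∧ degree G n = 3) := by
  classical
  obtain ⟨hw, hdeg, -, hint, -⟩ := hsol
  have : Finite {v // G.adj n v} :=
    Nat.finite_of_card_ne_zero (Nat.one_le_iff_ne_zero.mp (hdeg n).1)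
  have hfin : {v | G.adj n v}.Finite := Set.finite_coe_iff.mp this
  set S := hfin.toFinset
  have hcard : degree G n = S.card := Nat.card_eq_card_finite_toFinset hfin
  have hsub : {a, b} ⊆ S := by
    intro x hx
    rcases Finset.mem_insert.mp hx with rfl | hx
    · simpa [S] using ha
    · simpa [S, Finset.mem_singleton.mp hx] using hb
  have hsum : nodeWeight w n = ∑ x ∈ S, w n x :=
    finsum_eq_sum_of_support_subset _ fun x hx => by
      simpa [S] using not_imp_comm.mp (hw.2.2 n x) hx
  rw [← Finset.sum_sdiff hsub, Finset.sum_pair hab] at hsum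
  have hw12 : ∀ x ∈ S \ {a, b}, w n x = 1 ∨ w n x = 2 := fun x hx =>
    hw.2.1 n x (by simpa [S] using (Finset.mem_sdiff.mp hx).1)
  have hlo : (S \ {a, b}).card * 1 ≤ ∑ x ∈ S \ {a, b}, w n x :=
    Finset.card_nsmul_le_sum _ _ 1 fun x hx => by rcases hw12 x hx with h | h <;> omega
  have hhi : ∑ x ∈ S \ {a, b}, w n x ≤ (S \ {a, b}).card * 2 :=
    Finset.sum_le_card_nsmul _ _ 2 fun x hx => by rcases hw12 x hx with h | h <;> omega
  -- each of the `degree - 2` other neighbours contributes 1 or 2 to the node weight `degree + 1`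
  have hrest := Finset.card_sdiff_add_card_eq_card hsub
  rw [Finset.card_pair hab] at hrest
  have hint' := hint n (by unfold Interior; omega)
  have := (hdeg n).2
  omega

lemma apply_eq_of_sym2_eq {α : Type} {f : V → V → α} (hf : ∀ p q, f p q = f q p)
    {p q p' q' : V} (h : s(p, q) = s(p', q')) : f p q = f p' q' := by
  rcases Sym2.eq_iff.mp h with ⟨rfl, rfl⟩ | ⟨rfl, rfl⟩
  · rfl
  · exact hf _ _

end Graph

open Classical in
noncomputable def flipEdge (w : V → V → ℕ) (a b : V) : V → V → ℕ :=
  fun p q => if s(p, q) = s(a, b) then 3 - w p q else w p q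

noncomputable def walkWeights (w : V → V → ℕ) (P : ℕ → V) : ℕ → V → V → ℕ
  | 0 => w
  | j + 1 => flipEdge (walkWeights w P j) (P j) (P (j + 1))

/-- The single soliton of `(e, e)⊥` follows the walk `P` for `N` steps and then leaves. -/
noncomputable def walkConfig (w : V → V → ℕ) (P : ℕ → V) (N j : ℕ) : Config V 1 :=
  (walkWeights w P (min j N), fun _ => if j ≤ N then SolPos.node (P j) else SolPos.wait 0)

section Walk

variable {G : SGraph V} {w : V → V → ℕ} {P : ℕ → V} {N : ℕ} {e : V}

lemma walkWeights_succ_self (j : ℕ) :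
    walkWeights w P (j + 1) (P j) (P (j + 1)) = 3 - walkWeights w P j (P j) (P (j + 1)) :=
  if_pos rfl

lemma walkWeights_succ_of_ne {j : ℕ} {p q : V} (h : s(P j, P (j + 1)) ≠ s(p, q)) :
    walkWeights w P (j + 1) p q = walkWeights w P j p q :=
  if_neg (Ne.symm h)

lemma walkWeights_eq_of_forall_ne {i j : ℕ} {p q : V} (hij : i ≤ j)
    (h : ∀ k, i ≤ k → k < j → s(P k, P (k + 1)) ≠ s(p, q)) :
    walkWeights w P j p q = walkWeights w P i p q := by
  induction j, hij using Nat.le_induction with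
  | base => rfl
  | succ j hij ih =>
    rw [walkWeights_succ_of_ne (h j hij (Nat.lt_succ_self j)),
      ih fun k hik hkj => h k hik (by omega)]

lemma walkWeights_symm (hw : ∀ p q, w p q = w q p) (j : ℕ) (p q : V) :
    walkWeights w P j p q = walkWeights w P j q p := by
  induction j with
  | zero => exact hw p q
  | succ j ih =>
    simp only [walkWeights, flipEdge]
    rw [ih, Sym2.eq_swap (a := q)]

lemma walkConfig_snd_eq_node_iff {j : ℕ} {i : Fin 1} {p : V} :
    (walkConfig w P N j).2 i = SolPos.node p ↔ j ≤ N ∧ P j = p := by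
  unfold walkConfig
  split_ifs with h <;> simp [h]

lemma walkConfig_snd_of_lt {j : ℕ} {i : Fin 1} (h : N < j) :
    (walkConfig w P N j).2 i = SolPos.wait 0 := by
  simp [walkConfig, Nat.not_le.mpr h]

lemma walkConfig_moves_iff {j : ℕ} {p q : V} :
    MovesAlong (walkConfig w P N j).2 (walkConfig w P N (j + 1)).2 p q ↔
      j < N ∧ P j = p ∧ P (j + 1) = q := by
  unfold MovesAlong walkConfig
  by_cases hj : j < N
  · simp [hj, hj.le, Nat.succ_le_of_lt hj]
  · simp [hj, show ¬ j + 1 ≤ N by omega]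

lemma walkConfig_traverses_iff {j : ℕ} {p q : V} :
    (MovesAlong (walkConfig w P N j).2 (walkConfig w P N (j + 1)).2 p q ∨
      MovesAlong (walkConfig w P N j).2 (walkConfig w P N (j + 1)).2 q p) ↔
      j < N ∧ s(P j, P (j + 1)) = s(p, q) := by
  rw [walkConfig_moves_iff, walkConfig_moves_iff, Sym2.eq_iff]
  tauto

lemma walkConfig_stepOk (hPN : P N = e) (hadj : ∀ j < N, G.adj (P j) (P (j + 1)))
    {j : ℕ} (hj : j < N + 1) :
    StepOk G (singleBurst e e) (walkConfig w P N j) (walkConfig w P N (j + 1)) := by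
  refine ⟨fun _ => Or.inr (Or.inr (Or.inr
      ⟨P j, by simp [walkConfig, Nat.le_of_lt_succ hj], ?_⟩)),
    fun p q => ⟨fun hmove => ?_, fun hstay => ?_⟩⟩
  · rcases Nat.lt_succ_iff_lt_or_eq.mp hj with hj | rfl
    · exact Or.inr ⟨P (j + 1), hadj j hj, by simp [walkConfig, Nat.succ_le_of_lt hj]⟩
    · exact Or.inl ⟨hPN, by simp [walkConfig]⟩
  · obtain ⟨hjN, hpq⟩ := walkConfig_traverses_iff.mp hmove
    simp only [walkConfig, min_eq_left hjN.le, min_eq_left (Nat.succ_le_of_lt hjN)]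
    exact if_pos hpq.symm
  · have hkeep : ¬ (j < N ∧ s(P j, P (j + 1)) = s(p, q)) :=
      (not_congr walkConfig_traverses_iff).mp hstay
    simp only [walkConfig]
    rcases Nat.lt_succ_iff_lt_or_eq.mp hj with hjN | rfl
    · rw [min_eq_left hjN.le, min_eq_left (Nat.succ_le_of_lt hjN)]
      exact walkWeights_succ_of_ne fun h => hkeep ⟨hjN, h⟩
    · rw [min_eq_right (Nat.le_succ _), min_self]

lemma walkConfig_twoStepOk (he : Exterior G e) (hadj : ∀ j < N, G.adj (P j) (P (j + 1)))
    (hback : ∀ j, j + 2 ≤ N → P (j + 2) ≠ P j)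
    (halt : ∀ j, j + 2 ≤ N → walkWeights w P j (P j) (P (j + 1)) ≠
      walkWeights w P (j + 1) (P (j + 1)) (P (j + 2)))
    {j : ℕ} (hj : j + 2 ≤ N + 1) :
    TwoStepOk G (singleBurst e e) (walkConfig w P N j) (walkConfig w P N (j + 1))
      (walkConfig w P N (j + 2)) := by
  intro i
  refine ⟨fun n _ _ hwait => ?_, fun hexit _ _ => ?_, fun p q r hp hq _ hr => ?_, fun hin => ?_⟩
  · simp only [walkConfig] at hwait
    split_ifs at hwait
    simp at hwait
  · obtain ⟨-, hPe⟩ := walkConfig_snd_eq_node_iff.mp hexit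
    change P (j + 1) = e at hPe
    refine walkConfig_snd_of_lt (Nat.not_le.mp fun hjN => hback j hjN ?_)
    -- an exterior node has a single neighbour, so the walk cannot pass through it
    exact he.eq_of_adj (hPe ▸ hadj (j + 1) (by omega)) (hPe ▸ G.symm _ _ (hadj j (by omega)))
  · obtain ⟨-, rfl⟩ := walkConfig_snd_eq_node_iff.mp hp
    obtain ⟨-, rfl⟩ := walkConfig_snd_eq_node_iff.mp hq
    obtain ⟨hjN, rfl⟩ := walkConfig_snd_eq_node_iff.mp hr
    simp only [walkConfig, min_eq_left (show j ≤ N by omega),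
      min_eq_left (show j + 1 ≤ N by omega)]
    exact halt j hjN
  · have hjN : j + 2 ≤ N := by
      by_contra h
      exact hin (walkConfig_snd_of_lt (by omega))
    simp only [walkConfig, if_pos hjN, if_pos (show j + 1 ≤ N by omega),
      if_pos (show j ≤ N by omega), ne_eq, SolPos.node.injEq]
    exact ⟨fun h => G.loopless _ (h ▸ hadj (j + 1) (by omega)), hback j hjN⟩

theorem isTotalLegalTrail_walkConfig (he : Exterior G e) (hN : 0 < N) (hP0 : P 0 = e)
    (hPN : P N = e) (hadj : ∀ j < N, G.adj (P j) (P (j + 1)))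
    (hback : ∀ j, j + 2 ≤ N → P (j + 2) ≠ P j)
    (halt : ∀ j, j + 2 ≤ N → walkWeights w P j (P j) (P (j + 1)) ≠
      walkWeights w P (j + 1) (P (j + 1)) (P (j + 2))) :
    IsTotalLegalTrail G w (singleBurst e e) (N + 1) fun j => walkConfig w P N j := by
  refine ⟨⟨⟨by simp [walkConfig, walkWeights], ?_, fun j hj => walkConfig_stepOk hPN hadj hj,
    fun _ _ _ _ => ⟨P 1, walkConfig_snd_eq_node_iff.mpr ⟨hN, rfl⟩⟩,
    fun j hj => walkConfig_twoStepOk he hadj hback halt hj, fun j hj hfin => ?_⟩,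
    fun j _ => ⟨fun i i' hii' => absurd (Subsingleton.elim (α := Fin 1) i i') hii',
      fun i i' hii' => absurd (Subsingleton.elim (α := Fin 1) i i') hii'⟩⟩,
    fun _ => walkConfig_snd_of_lt (Nat.lt_succ_self N)⟩
  · funext i
    simp [walkConfig, initPos, Burst.arrival, singleBurst, hP0]
  · have := hfin ⟨0, Nat.one_pos⟩
    simp [walkConfig, show j ≤ N by omega] at this

lemma existsUnique_walkConfig_traverses {a b : V}
    (h : ∃! k, k < N ∧ s(P k, P (k + 1)) = s(a, b)) :
    ∃! j : Fin (N + 1), ∃ i : Fin 1,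
      ((walkConfig w P N j.castSucc).2 i = SolPos.node a ∧
        (walkConfig w P N j.succ).2 i = SolPos.node b) ∨
      ((walkConfig w P N j.castSucc).2 i = SolPos.node b ∧
        (walkConfig w P N j.succ).2 i = SolPos.node a) := by
  have key : ∀ j : Fin (N + 1), (∃ i : Fin 1,
      ((walkConfig w P N j.castSucc).2 i = SolPos.node a ∧
        (walkConfig w P N j.succ).2 i = SolPos.node b) ∨
      ((walkConfig w P N j.castSucc).2 i = SolPos.node b ∧
        (walkConfig w P N j.succ).2 i = SolPos.node a)) ↔
      (j : ℕ) < N ∧ s(P j, P (j + 1)) = s(a, b) := fun j => by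
    rw [exists_or]
    exact walkConfig_traverses_iff
  obtain ⟨k, hk, huniq⟩ := h
  exact ⟨⟨k, by omega⟩, (key _).mpr hk, fun j hj => Fin.ext (huniq j ((key j).mp hj))⟩

end Walk

def lollipop (v C : ℕ → V) (m M j : ℕ) : V :=
  if j ≤ m then v (m - j) else if j ≤ m + M then C (j - m) else v (j - (m + M))

/-- The height `d` certifies that the tail `v` leaves the loop `C` and never returns. -/
structure IsLollipop (d : V → ℕ) (v C : ℕ → V) (m M : ℕ) : Prop where
  tail_zero : v 0 = C 0
  loop_closed : C M = C 0
  height_tail : ∀ i ≤ m, d (v i) = i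
  height_loop : ∀ r, d (C r) = 0
  loop_edge_injective :
    ∀ r r', r < M → r' < M → s(C r, C (r + 1)) = s(C r', C (r' + 1)) → r = r'

section Lollipop

variable {v C : ℕ → V} {m M : ℕ}

lemma lollipop_of_le {j : ℕ} (hj : j ≤ m) : lollipop v C m M j = v (m - j) := if_pos hj

lemma lollipop_of_le_of_le (hv0 : v 0 = C 0) {j : ℕ} (hj₁ : m ≤ j) (hj₂ : j ≤ m + M) :
    lollipop v C m M j = C (j - m) := by
  unfold lollipop
  split_ifs with h
  · rw [show j = m by omega, Nat.sub_self, hv0]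
  · rfl

lemma lollipop_of_add_le (hv0 : v 0 = C 0) (hCM : C M = C 0) {j : ℕ} (hj : m + M ≤ j) :
    lollipop v C m M j = v (j - (m + M)) := by
  unfold lollipop
  split_ifs with h₁ h₂
  · congr 1; omega
  · rw [show j - m = M by omega, hCM, ← hv0]; congr 1; omega
  · rfl

lemma lollipop_edge_of_lt {j : ℕ} (hj : j < m) :
    s(lollipop v C m M j, lollipop v C m M (j + 1)) = s(v (m - 1 - j), v (m - 1 - j + 1)) := by
  rw [lollipop_of_le hj.le, lollipop_of_le hj]
  exact Sym2.eq_iff.mpr (Or.inr ⟨by congr 1; omega, by congr 1; omega⟩)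

lemma lollipop_edge_of_le_of_lt (hv0 : v 0 = C 0) {j : ℕ} (hj₁ : m ≤ j) (hj₂ : j < m + M) :
    s(lollipop v C m M j, lollipop v C m M (j + 1)) = s(C (j - m), C (j - m + 1)) := by
  rw [lollipop_of_le_of_le hv0 hj₁ hj₂.le, lollipop_of_le_of_le hv0 (by omega) hj₂]
  congr 3; omega

lemma lollipop_edge_of_le (hv0 : v 0 = C 0) (hCM : C M = C 0) {j : ℕ} (hj : m + M ≤ j) :
    s(lollipop v C m M j, lollipop v C m M (j + 1)) =
      s(v (j - (m + M)), v (j - (m + M) + 1)) := by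
  rw [lollipop_of_add_le hv0 hCM hj, lollipop_of_add_le hv0 hCM (by omega)]
  congr 3; omega

lemma lollipop_adj {G : SGraph V} (hv0 : v 0 = C 0) (hCM : C M = C 0)
    (hv : ∀ i < m, G.adj (v i) (v (i + 1))) (hC : ∀ r < M, G.adj (C r) (C (r + 1))) {j : ℕ}
    (hj : j < 2 * m + M) : G.adj (lollipop v C m M j) (lollipop v C m M (j + 1)) := by
  have hsymm : ∀ p q, G.adj p q = G.adj q p := fun p q => propext ⟨G.symm p q, G.symm q p⟩
  by_cases hj₁ : j < m
  · rw [apply_eq_of_sym2_eq hsymm (lollipop_edge_of_lt hj₁)]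
    exact hv _ (by omega)
  by_cases hj₂ : j < m + M
  · rw [apply_eq_of_sym2_eq hsymm (lollipop_edge_of_le_of_lt hv0 (by omega) hj₂)]
    exact hC _ (by omega)
  · rw [apply_eq_of_sym2_eq hsymm (lollipop_edge_of_le hv0 hCM (by omega))]
    exact hv _ (by omega)

lemma lollipop_edge_height (d : V → ℕ) (hv0 : v 0 = C 0) (hCM : C M = C 0)
    (hv : ∀ i ≤ m, d (v i) = i) (hC : ∀ r, d (C r) = 0) {j : ℕ} (hj : j < 2 * m + M) :
    d (lollipop v C m M j) + d (lollipop v C m M (j + 1)) =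
      if j < m then 2 * (m - 1 - j) + 1 else if j < m + M then 0 else 2 * (j - (m + M)) + 1 := by
  have hsum : ∀ {p q p' q' : V}, s(p, q) = s(p', q') → d p + d q = d p' + d q' :=
    apply_eq_of_sym2_eq (f := fun a b => d a + d b) fun a b => add_comm _ _
  split_ifs with h₁ h₂
  · rw [hsum (lollipop_edge_of_lt h₁), hv _ (by omega), hv _ (by omega)]; ring
  · rw [hsum (lollipop_edge_of_le_of_lt hv0 (by omega) h₂), hC, hC]
  · rw [hsum (lollipop_edge_of_le hv0 hCM (by omega)), hv _ (by omega), hv _ (by omega)]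
    ring

/-- Apart from the tail, which is traversed once in each direction, the lollipop walk never
uses an edge twice. -/
lemma IsLollipop.edge_eq_iff {d : V → ℕ} (hP : IsLollipop d v C m M) {k j : ℕ} (hkj : k < j)
    (hj : j < 2 * m + M) :
    s(lollipop v C m M k, lollipop v C m M (k + 1)) =
        s(lollipop v C m M j, lollipop v C m M (j + 1)) ↔
      m + M ≤ j ∧ k + j + 1 = 2 * m + M := by
  obtain ⟨hv0, hCM, hv, hC, hloop⟩ := hP
  constructor
  · intro hkj_eq
    by_cases hboth : m ≤ k ∧ j < m + M
    · rw [lollipop_edge_of_le_of_lt hv0 hboth.1 (by omega),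
        lollipop_edge_of_le_of_lt hv0 (by omega) hboth.2] at hkj_eq
      have := hloop _ _ (by omega) (by omega) hkj_eq
      omega
    have hheight := apply_eq_of_sym2_eq (f := fun a b => d a + d b) (fun a b => add_comm _ _)
      hkj_eq
    rw [lollipop_edge_height d hv0 hCM hv hC (by omega),
      lollipop_edge_height d hv0 hCM hv hC hj] at hheight
    split_ifs at hheight <;> omega
  · rintro ⟨hj₁, hsum⟩
    rw [lollipop_edge_of_lt (by omega), lollipop_edge_of_le hv0 hCM hj₁]
    rw [show m - 1 - k = j - (m + M) by omega]

lemma IsLollipop.add_two_ne {d : V → ℕ} (hP : IsLollipop d v C m M) (hM : 0 < M) {j : ℕ}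
    (hj : j + 2 ≤ 2 * m + M) : lollipop v C m M (j + 2) ≠ lollipop v C m M j := by
  intro hback
  have := (hP.edge_eq_iff (Nat.lt_succ_self j) (by omega)).mp (by rw [hback, Sym2.eq_swap])
  omega

lemma IsLollipop.existsUnique_edge_eq {d : V → ℕ} (hP : IsLollipop d v C m M) {x : Sym2 V}
    (hx : ∃ r < M, s(C r, C (r + 1)) = x) :
    ∃! k, k < 2 * m + M ∧ s(lollipop v C m M k, lollipop v C m M (k + 1)) = x := by
  obtain ⟨r, hr, hrx⟩ := hx
  have hedge : s(lollipop v C m M (m + r), lollipop v C m M (m + r + 1)) = x := by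
    rw [lollipop_edge_of_le_of_lt hP.tail_zero (by omega) (by omega), Nat.add_sub_cancel_left,
      hrx]
  refine ⟨m + r, ⟨by omega, hedge⟩, fun k ⟨hk, hkx⟩ => ?_⟩
  rcases lt_trichotomy k (m + r) with hlt | heq | hgt
  · have := (hP.edge_eq_iff hlt (by omega)).mp (hkx.trans hedge.symm)
    omega
  · exact heq
  · have := (hP.edge_eq_iff hgt hk).mp (hedge.trans hkx.symm)
    omega

lemma lollipop_weight_of_lt {w : V → V → ℕ} (hw : ∀ p q, w p q = w q p) (hv0 : v 0 = C 0)
    (hwv : ∀ i < m, w (v i) (v (i + 1)) = if Even i then 1 else 2)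
    (hwC : ∀ r < M, w (C r) (C (r + 1)) = if Even r then 2 else 1) {j : ℕ} (hj : j < m + M) :
    w (lollipop v C m M j) (lollipop v C m M (j + 1)) = if Even (j + m) then 2 else 1 := by
  by_cases hjm : j < m
  · rw [apply_eq_of_sym2_eq hw (lollipop_edge_of_lt hjm), hwv _ (by omega)]
    simp only [Nat.even_iff]
    split_ifs <;> omega
  · rw [apply_eq_of_sym2_eq hw (lollipop_edge_of_le_of_lt hv0 (by omega) hj), hwC _ (by omega)]
    simp only [Nat.even_iff]
    split_ifs <;> omega

lemma IsLollipop.walkWeights_edge {d : V → ℕ} {w : V → V → ℕ} (hP : IsLollipop d v C m M)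
    (hw : ∀ p q, w p q = w q p) (hM : Even M)
    (hwv : ∀ i < m, w (v i) (v (i + 1)) = if Even i then 1 else 2)
    (hwC : ∀ r < M, w (C r) (C (r + 1)) = if Even r then 2 else 1) {j : ℕ}
    (hj : j < 2 * m + M) :
    walkWeights w (lollipop v C m M) j (lollipop v C m M j) (lollipop v C m M (j + 1)) =
      if Even (j + m) then 2 else 1 := by
  set P := lollipop v C m M
  have hfirst : ∀ j < m + M, walkWeights w P j (P j) (P (j + 1)) = w (P j) (P (j + 1)) :=
    fun j hj => walkWeights_eq_of_forall_ne (Nat.zero_le j) fun k _ hkj heq => by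
      have := (hP.edge_eq_iff hkj (by omega)).mp heq
      omega
  by_cases hjM : j < m + M
  · rw [hfirst j hjM, lollipop_weight_of_lt hw hP.tail_zero hwv hwC hjM]
  -- on the way back, the soliton meets the edge it flipped at step `k` on the way down
  set k := 2 * m + M - 1 - j
  have hk : s(P k, P (k + 1)) = s(P j, P (j + 1)) := (hP.edge_eq_iff (by omega) hj).mpr
    ⟨by omega, by omega⟩
  calc walkWeights w P j (P j) (P (j + 1))
      = walkWeights w P (k + 1) (P j) (P (j + 1)) :=
        walkWeights_eq_of_forall_ne (by omega) fun k' hk' hk'j heq => by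
          have := (hP.edge_eq_iff hk'j hj).mp heq
          omega
    _ = walkWeights w P (k + 1) (P k) (P (k + 1)) :=
        apply_eq_of_sym2_eq (walkWeights_symm hw _) hk.symm
    _ = 3 - w (P k) (P (k + 1)) := by rw [walkWeights_succ_self, hfirst k (by omega)]
    _ = if Even (j + m) then 2 else 1 := by
        rw [lollipop_weight_of_lt hw hP.tail_zero hwv hwC (by omega)]
        obtain ⟨M', rfl⟩ := hM
        simp only [Nat.even_iff]
        split_ifs <;> omega

end Lollipop

lemma _root_.ZMod.even_of_natCast_eq_two_mul {L k : ℕ} {d : ZMod (2 * L)}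
    (h : (k : ZMod (2 * L)) = 2 * d) : Even k := by
  have h2 := congrArg (ZMod.castHom (dvd_mul_right 2 L) (ZMod 2)) h
  rw [map_natCast, map_mul, map_ofNat, show (2 : ZMod 2) = 0 from rfl, zero_mul] at h2
  exact ZMod.natCast_eq_zero_iff_even.mp h2

lemma _root_.ZMod.two_ne_zero_of_two_le {L : ℕ} (hL : 2 ≤ L) : (2 : ZMod (2 * L)) ≠ 0 := by
  intro h
  have := (ZMod.natCast_eq_zero_iff 2 (2 * L)).mp (by exact_mod_cast h)
  have := Nat.le_of_dvd two_pos this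
  omega

lemma alternate_of_even_defects {L : ℕ} (hL : 0 < L) {E : ZMod (2 * L) → ℕ}
    {D : ZMod (2 * L) → Prop} (hpos : ∀ t, 1 ≤ E t)
    (hsum : ∀ t, E (t - 1) + E t = 3 ∨ (E (t - 1) + E t = 2 ∧ D t))
    (hD : ∀ s t, D s → D t → ∃ d, t = s + 2 * d) (t : ZMod (2 * L)) :
    E (t - 1) + E t = 3 := by
  by_contra hne
  obtain ⟨ht, hDt⟩ := (hsum t).resolve_left hne
  -- from an exception the sequence alternates 1, 2, 1, …, since a further exception would lie
  -- at odd distance; going once round, this gives `E (t - 1) = 2`, but the exception has 1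
  have hE : ∀ k : ℕ, E (t + k) = if Even k then 1 else 2 := by
    intro k
    induction k with
    | zero =>
      have := hpos (t - 1)
      have := hpos t
      rw [Nat.cast_zero, add_zero, if_pos Even.zero]
      omega
    | succ k ih =>
      have hprev : t + ((k + 1 : ℕ) : ZMod (2 * L)) - 1 = t + k := by push_cast; ring
      rcases hsum (t + (k + 1 : ℕ)) with h | ⟨h, hDk⟩
      · rw [hprev, ih] at h
        simp only [Nat.even_add_one]
        split_ifs at * <;> omega
      · obtain ⟨d, hd⟩ := hD t _ hDt hDk
        have hk : Even (k + 1) := ZMod.even_of_natCast_eq_two_mul (add_left_cancel hd)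
        rw [hprev, ih, if_neg (Nat.even_add_one.mp hk)] at h
        have := hpos (t + (k + 1 : ℕ))
        omega
  have hlast : t + ((2 * L - 1 : ℕ) : ZMod (2 * L)) = t - 1 := by
    rw [Nat.cast_sub (by omega), ZMod.natCast_self, Nat.cast_one]; ring
  have hodd : ¬ Even (2 * L - 1) := by rw [Nat.not_even_iff_odd]; exact ⟨L - 1, by omega⟩
  have := hE (2 * L - 1)
  rw [hlast, if_neg hodd] at this
  have := hpos t
  omega

section Distance

variable {G : SGraph V}

lemma WalkLen.cons {u v x : V} {n : ℕ} (h : G.adj u v) (hw : WalkLen G v x n) :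
    WalkLen G u x (n + 1) := by
  induction hw with
  | refl => exact .tail (.refl u) h
  | tail _ hadj ih => exact .tail ih hadj

lemma WalkLen.eq_of_zero {u x : V} (h : WalkLen G u x 0) : u = x := by
  cases h
  rfl

lemma WalkLen.exists_adj_of_succ {u : V} {n : ℕ} :
    ∀ {x : V}, WalkLen G u x (n + 1) → ∃ v, G.adj u v ∧ WalkLen G v x n := by
  induction n with
  | zero =>
    rintro x (_ | ⟨hw, hadj⟩)
    obtain rfl := hw.eq_of_zero
    exact ⟨x, hadj, .refl x⟩
  | succ n ih =>
    rintro x (_ | ⟨hw, hadj⟩)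
    obtain ⟨v, hv, hw'⟩ := ih hw
    exact ⟨v, hv, .tail hw' hadj⟩

lemma exists_walkLen_of_reflTransGen {u x : V} (h : Relation.ReflTransGen G.adj u x) :
    ∃ n, WalkLen G u x n := by
  induction h with
  | refl => exact ⟨0, .refl u⟩
  | tail _ hadj ih =>
    obtain ⟨n, hn⟩ := ih
    exact ⟨n + 1, .tail hn hadj⟩

variable {L : ℕ} {cyc : ZMod (2 * L) → V}

lemma distToCycle_cyc (t : ZMod (2 * L)) : distToCycle G cyc (cyc t) = 0 :=
  Nat.eq_zero_of_le_zero (Nat.sInf_le ⟨t, .refl _⟩)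

lemma distToCycle_le {n : V} {t : ZMod (2 * L)} {d : ℕ} (h : WalkLen G n (cyc t) d) :
    distToCycle G cyc n ≤ d :=
  Nat.sInf_le ⟨t, h⟩

lemma exists_walkLen_distToCycle (hconn : ConnectedG G) (n : V) :
    ∃ t, WalkLen G n (cyc t) (distToCycle G cyc n) :=
  Nat.sInf_mem (s := {d | ∃ t, WalkLen G n (cyc t) d})
    (let ⟨d, hd⟩ := exists_walkLen_of_reflTransGen (hconn n (cyc 0)); ⟨d, 0, hd⟩)

lemma exists_adj_distToCycle (hconn : ConnectedG G) {n : V} {k : ℕ}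
    (h : distToCycle G cyc n = k + 1) : ∃ n', G.adj n n' ∧ distToCycle G cyc n' = k := by
  obtain ⟨t, ht⟩ := exists_walkLen_distToCycle (cyc := cyc) hconn n
  rw [h] at ht
  obtain ⟨n', hadj, hw⟩ := ht.exists_adj_of_succ
  obtain ⟨t', ht'⟩ := exists_walkLen_distToCycle (cyc := cyc) hconn n'
  have := distToCycle_le (ht'.cons hadj)
  exact ⟨n', hadj, le_antisymm (distToCycle_le hw) (by omega)⟩

lemma exists_geodesic_to_cycle (hconn : ConnectedG G) (n : V) :
    ∃ (s : ZMod (2 * L)) (v : ℕ → V), v 0 = cyc s ∧ v (distToCycle G cyc n) = n ∧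
      (∀ i < distToCycle G cyc n, G.adj (v i) (v (i + 1))) ∧
      ∀ i ≤ distToCycle G cyc n, distToCycle G cyc (v i) = i := by
  generalize hk : distToCycle G cyc n = k
  induction k generalizing n with
  | zero =>
    obtain ⟨t, ht⟩ := exists_walkLen_distToCycle (cyc := cyc) hconn n
    rw [hk] at ht
    refine ⟨t, fun _ => n, ht.eq_of_zero, rfl, fun i hi => absurd hi (Nat.not_lt_zero i), ?_⟩
    intro i hi
    rw [Nat.le_zero.mp hi, hk]
  | succ k ih =>
    obtain ⟨n', hadj, hn'⟩ := exists_adj_distToCycle hconn hk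
    obtain ⟨s, v, hv0, hvk, hvadj, hvdist⟩ := ih n' hn'
    refine ⟨s, fun i => if i = k + 1 then n else v i, by simpa using hv0, by simp, ?_, ?_⟩
    · intro i hi
      rcases Nat.lt_succ_iff_lt_or_eq.mp hi with hi | rfl
      · simpa [show i ≠ k + 1 by omega, hi.ne] using hvadj i hi
      · simpa [hvk] using G.symm _ _ hadj
    · intro i hi
      rcases Nat.lt_or_eq_of_le hi with hi | rfl
      · simpa [hi.ne] using hvdist i (by omega)
      · simpa using hk

end Distance

section Chestnut

variable {G : SGraph V} {w : V → V → ℕ} {L : ℕ} {cyc : ZMod (2 * L) → V}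

lemma IsChestnutWith.cyc_sub_one_ne (hch : IsChestnutWith G w L cyc) (t : ZMod (2 * L)) :
    cyc (t - 1) ≠ cyc (t + 1) := by
  obtain ⟨-, -, hL, hinj, -⟩ := hch
  exact fun h => ZMod.two_ne_zero_of_two_le hL (by linear_combination -(hinj h))

lemma IsChestnutWith.adj_sub_one (hch : IsChestnutWith G w L cyc) (t : ZMod (2 * L)) :
    G.adj (cyc t) (cyc (t - 1)) := by
  obtain ⟨-, -, -, -, hadj, -⟩ := hch
  exact G.symm _ _ (by simpa using hadj (t - 1))

lemma IsChestnutWith.cycle_weight_add (hch : IsChestnutWith G w L cyc) (t : ZMod (2 * L)) :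
    w (cyc t) (cyc (t - 1)) + w (cyc t) (cyc (t + 1)) = 3 := by
  have hne := hch.cyc_sub_one_ne
  have hadj' := hch.adj_sub_one
  obtain ⟨hsol, -, hL, -, hadj, -, -, hevenc, -⟩ := hch
  have hsum : ∀ t, w (cyc (t - 1)) (cyc (t - 1 + 1)) + w (cyc t) (cyc (t + 1)) = 3 ∨
      (w (cyc (t - 1)) (cyc (t - 1 + 1)) + w (cyc t) (cyc (t + 1)) = 2 ∧
        degree G (cyc t) = 3) := fun t => by
    rw [sub_add_cancel, hsol.1.1 (cyc (t - 1))]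
    exact hsol.weight_add_weight (hadj' t) (hadj t) (hne t)
  have := alternate_of_even_defects (E := fun t => w (cyc t) (cyc (t + 1)))
    (by omega) (fun t => by rcases hsol.1.2.1 _ _ (hadj t) with h | h <;> omega) hsum hevenc t
  rwa [sub_add_cancel, hsol.1.1 (cyc (t - 1))] at this

lemma IsChestnutWith.adj_add_sign (hch : IsChestnutWith G w L cyc) {σ : ZMod (2 * L)}
    (hσ : σ = 1 ∨ σ = -1) (t : ZMod (2 * L)) : G.adj (cyc t) (cyc (t + σ)) := by
  have hadj : ∀ t, G.adj (cyc t) (cyc (t + 1)) := hch.2.2.2.2.1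
  rcases hσ with rfl | rfl
  · exact hadj t
  · rw [← sub_eq_add_neg]
    exact hch.adj_sub_one t

lemma IsChestnutWith.cycle_weight_add_sign (hch : IsChestnutWith G w L cyc) {σ : ZMod (2 * L)}
    (hσ : σ = 1 ∨ σ = -1) (t : ZMod (2 * L)) :
    w (cyc t) (cyc (t - σ)) + w (cyc t) (cyc (t + σ)) = 3 := by
  rcases hσ with rfl | rfl
  · exact hch.cycle_weight_add t
  · rw [sub_neg_eq_add, ← sub_eq_add_neg, add_comm]
    exact hch.cycle_weight_add t

lemma IsChestnutWith.exists_sign_weight_eq_two (hch : IsChestnutWith G w L cyc)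
    (s : ZMod (2 * L)) :
    ∃ σ : ZMod (2 * L), (σ = 1 ∨ σ = -1) ∧ w (cyc s) (cyc (s + σ)) = 2 := by
  by_cases h : w (cyc s) (cyc (s + 1)) = 2
  · exact ⟨1, .inl rfl, h⟩
  · refine ⟨-1, .inr rfl, ?_⟩
    have hw12 : ∀ u v, G.adj u v → w u v = 1 ∨ w u v = 2 := hch.1.1.2.1
    have := hch.cycle_weight_add s
    rcases hw12 _ _ (hch.adj_add_sign (.inl rfl) s) with h' | h'
    · rw [← sub_eq_add_neg]
      omega
    · exact absurd h' h

lemma IsChestnutWith.loop_weight (hch : IsChestnutWith G w L cyc) {σ : ZMod (2 * L)}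
    (hσ : σ = 1 ∨ σ = -1) {s : ZMod (2 * L)} (hs : w (cyc s) (cyc (s + σ)) = 2) (r : ℕ) :
    w (cyc (s + σ * r)) (cyc (s + σ * (r + 1 : ℕ))) = if Even r then 2 else 1 := by
  have hsymm : ∀ p q, w p q = w q p := hch.1.1.1
  induction r with
  | zero => simpa using hs
  | succ r ih =>
    have h := hch.cycle_weight_add_sign hσ (s + σ * (r + 1 : ℕ))
    rw [show s + σ * ((r + 1 : ℕ) : ZMod (2 * L)) - σ = s + σ * r by push_cast; ring,
      show s + σ * ((r + 1 : ℕ) : ZMod (2 * L)) + σ = s + σ * (r + 1 + 1 : ℕ) by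
        push_cast; ring,
      hsymm (cyc (s + σ * (r + 1 : ℕ))), ih] at h
    simp only [Nat.even_add_one]
    split_ifs at * <;> omega

lemma IsChestnutWith.loop_edge_injective (hch : IsChestnutWith G w L cyc) {σ : ZMod (2 * L)}
    (hσ : σ = 1 ∨ σ = -1) (s : ZMod (2 * L)) {r r' : ℕ} (hr : r < 2 * L) (hr' : r' < 2 * L)
    (h : s(cyc (s + σ * r), cyc (s + σ * (r + 1 : ℕ))) =
      s(cyc (s + σ * r'), cyc (s + σ * (r' + 1 : ℕ)))) : r = r' := by
  obtain ⟨-, -, hL, hinj, -⟩ := hch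
  have hσσ : σ * σ = 1 := by rcases hσ with rfl | rfl <;> ring
  rcases Sym2.eq_iff.mp h with ⟨h₁, -⟩ | ⟨h₁, h₂⟩
  · have hrr' : (r : ZMod (2 * L)) = r' := by
      linear_combination σ * add_left_cancel (hinj h₁) + (r' - r : ZMod (2 * L)) * hσσ
    rwa [ZMod.natCast_eq_natCast_iff', Nat.mod_eq_of_lt hr, Nat.mod_eq_of_lt hr'] at hrr'
  · have e₁ := hinj h₁
    have e₂ := hinj h₂
    push_cast at e₁ e₂
    exact absurd (by linear_combination σ * (e₂ - e₁) - 2 * hσσ)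
      (ZMod.two_ne_zero_of_two_le hL)

lemma IsChestnutWith.exists_loop_edge_eq (hch : IsChestnutWith G w L cyc) {σ : ZMod (2 * L)}
    (hσ : σ = 1 ∨ σ = -1) (s t : ZMod (2 * L)) :
    ∃ r < 2 * L, s(cyc (s + σ * r), cyc (s + σ * (r + 1 : ℕ))) = s(cyc t, cyc (t + 1)) := by
  have hL : 2 ≤ L := hch.2.2.1
  have : NeZero (2 * L) := ⟨by omega⟩
  rcases hσ with rfl | rfl
  · refine ⟨(t - s).val, ZMod.val_lt _, ?_⟩
    push_cast
    rw [ZMod.natCast_zmod_val, show s + 1 * (t - s) = t by ring,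
      show s + 1 * (t - s + 1) = t + 1 by ring]
  · refine ⟨(s - t - 1).val, ZMod.val_lt _, ?_⟩
    push_cast
    rw [ZMod.natCast_zmod_val, show s + -1 * (s - t - 1) = t + 1 by ring,
      show s + -1 * (s - t - 1 + 1) = t by ring, Sym2.eq_swap]

lemma IsChestnutWith.tail_weight (hch : IsChestnutWith G w L cyc) {s : ZMod (2 * L)}
    {v : ℕ → V} {m : ℕ} (hv0 : v 0 = cyc s) (hvadj : ∀ i < m, G.adj (v i) (v (i + 1)))
    (hvdist : ∀ i ≤ m, distToCycle G cyc (v i) = i) :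
    ∀ i < m, w (v i) (v (i + 1)) = if Even i then 1 else 2 := by
  obtain ⟨σ, hσ, hσw⟩ := hch.exists_sign_weight_eq_two s
  have hσadj := hch.adj_add_sign hσ s
  obtain ⟨hsol, -, -, -, -, -, -, -, hoff⟩ := hch
  have hw12 : ∀ {a b}, G.adj a b → w a b = 1 ∨ w a b = 2 := hsol.1.2.1 _ _
  have hoffcyc : ∀ i, 1 ≤ i → i ≤ m → ∀ t, v i ≠ cyc t := fun i h₁ h₂ t h => by
    have := hvdist i h₂
    rw [h, distToCycle_cyc] at this
    omega
  intro i
  induction i with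
  | zero =>
    intro hm
    have hadj₁ : G.adj (cyc s) (v 1) := hv0 ▸ hvadj 0 hm
    have h₁ := hw12 hadj₁
    rw [hv0, zero_add, if_pos Even.zero]
    rcases hsol.weight_add_weight hσadj hadj₁ (hoffcyc 1 le_rfl hm _).symm with
      h | ⟨h, -⟩ <;> omega
  | succ i ih =>
    intro hi
    have hne : v i ≠ v (i + 2) := fun h => by
      have := hvdist i (by omega)
      rw [h, hvdist (i + 2) (by omega)] at this
      omega
    have h₁ := hw12 (hvadj (i + 1) hi)
    have ih' := ih (by omega)
    rw [hsol.1.1] at ih'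
    rcases hsol.weight_add_weight (G.symm _ _ (hvadj i (by omega))) (hvadj (i + 1) hi) hne
      with h | ⟨h, hdeg⟩
    · simp only [Nat.even_add_one]
      split_ifs at * <;> omega
    · have hodd := hoff (v (i + 1)) (hoffcyc (i + 1) (by omega) (by omega)) hdeg
      rw [hvdist (i + 1) (by omega), Nat.even_add_one] at hodd
      rw [if_neg hodd] at ih'
      rw [if_pos (Nat.even_add_one.mpr hodd)]
      omega

end Chestnut

theorem chestnut_single_soliton_trail_general {V : Type}
    (G : SGraph V) (w : V → V → ℕ) (L : ℕ) (cyc : ZMod (2 * L) → V)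
    (hch : IsChestnutWith G w L cyc) (e : V) (he : Exterior G e) :
    ∃ (len : ℕ) (cfg : Fin (len + 1) → Config V (singleBurst e e).m),
      IsTotalLegalTrail G w (singleBurst e e) len cfg ∧
      ∀ t : ZMod (2 * L), ∃! j : Fin len, ∃ i : Fin (singleBurst e e).m,
        ((cfg j.castSucc).2 i = SolPos.node (cyc t) ∧
          (cfg j.succ).2 i = SolPos.node (cyc (t + 1))) ∨
        ((cfg j.castSucc).2 i = SolPos.node (cyc (t + 1)) ∧
          (cfg j.succ).2 i = SolPos.node (cyc t)) := by
  have hsymm : ∀ p q, w p q = w q p := hch.1.1.1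
  have hL : 2 ≤ L := hch.2.2.1
  have hconn : ConnectedG G := hch.2.2.2.2.2.1
  obtain ⟨s, v, hv0, hve, hvadj, hvdist⟩ := exists_geodesic_to_cycle hconn e
  obtain ⟨σ, hσ, hσw⟩ := hch.exists_sign_weight_eq_two s
  set m := distToCycle G cyc e
  set C : ℕ → V := fun r => cyc (s + σ * r)
  have hP : IsLollipop (distToCycle G cyc) v C m (2 * L) :=
    ⟨by simp [C, hv0], by simp [C], hvdist, fun r => distToCycle_cyc _,
      fun r r' => hch.loop_edge_injective hσ s⟩
  have hCadj : ∀ r < 2 * L, G.adj (C r) (C (r + 1)) := fun r _ => by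
    simpa [C, mul_add, add_assoc] using hch.adj_add_sign hσ (s + σ * r)
  have hweight := fun j (hj : j < 2 * m + 2 * L) => hP.walkWeights_edge hsymm (even_two_mul L)
    (hch.tail_weight hv0 hvadj hvdist) (fun r _ => hch.loop_weight hσ hσw r) hj
  refine ⟨2 * m + 2 * L + 1, fun j => walkConfig w (lollipop v C m (2 * L)) (2 * m + 2 * L) j,
    isTotalLegalTrail_walkConfig he (by omega) ?_ ?_
      (fun j hj => lollipop_adj hP.tail_zero hP.loop_closed hvadj hCadj hj)
      (fun j hj => hP.add_two_ne (by omega) hj) fun j hj => ?_,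
    fun t => existsUnique_walkConfig_traverses
      (hP.existsUnique_edge_eq (hch.exists_loop_edge_eq hσ s t))⟩
  · rw [lollipop_of_le (Nat.zero_le _), Nat.sub_zero, hve]
  · rw [lollipop_of_add_le hP.tail_zero hP.loop_closed (by omega),
      show 2 * m + 2 * L - (m + 2 * L) = m by omega, hve]
  · rw [hweight j (by omega), hweight (j + 1) (by omega)]
    simp only [Nat.even_iff]
    split_ifs <;> omega

/-- For a chestnut `G` and an exterior node `e`, there is a total
legal configuration trail for `G` and the burst `(e,e)⊥` in which the soliton
traverses the cycle exactly once (every cycle edge is used exactly once). -/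
theorem chestnut_single_soliton_trail {V : Type} [Finite V]
    (G : SGraph V) (w : V → V → ℕ) (L : ℕ) (cyc : ZMod (2 * L) → V)
    (hch : IsChestnutWith G w L cyc) (e : V) (he : Exterior G e) :
    ∃ (len : ℕ) (cfg : Fin (len + 1) → Config V (singleBurst e e).m),
      IsTotalLegalTrail G w (singleBurst e e) len cfg ∧
      ∀ t : ZMod (2 * L), ∃! j : Fin len, ∃ i : Fin (singleBurst e e).m,
        ((cfg j.castSucc).2 i = SolPos.node (cyc t) ∧
          (cfg j.succ).2 i = SolPos.node (cyc (t + 1))) ∨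
        ((cfg j.castSucc).2 i = SolPos.node (cyc (t + 1)) ∧
          (cfg j.succ).2 i = SolPos.node (cyc t)) :=
  chestnut_single_soliton_trail_general G w L cyc hch e he

end Soliton
end

section
/- Let G=(N,E,w) be an indecomposable soliton graph. If the underlying graph (N,E) is a tree, then G is strongly deterministic: for every set B of bursts for G, every G'∈States(G,B) and every b∈B, there is at most one total legal configuration trail for G' and b. -/
/- Formalization of multi-soliton automata (Bordihn–Schulz),
   following the definitions of the paper. -/

namespace Soliton

variable {V : Type}

/-! ### Auxiliary lemmas for Statement 7 -/

/-- A non-backtracking walk of length `k` in `G`, given as a function `ℕ → V`. -/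
def IsNB (G : SGraph V) (f : ℕ → V) (k : ℕ) : Prop :=
  (∀ j, j < k → G.adj (f j) (f (j + 1))) ∧ (∀ j, j + 2 ≤ k → f (j + 2) ≠ f j)

lemma IsNB.shift {G : SGraph V} {f : ℕ → V} {k : ℕ} (h : IsNB G f (k + 1)) :
    IsNB G (fun t => f (t + 1)) k :=
  ⟨fun j hj => h.1 (j + 1) (by omega), fun j hj => h.2 (j + 1) (by omega)⟩

lemma rtg_chain {R : V → V → Prop} (f : ℕ → V) (n : ℕ)
    (h : ∀ t, t < n → R (f t) (f (t + 1))) :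
    Relation.ReflTransGen R (f 0) (f n) := by
  induction n with
  | zero => exact Relation.ReflTransGen.refl
  | succ n ih =>
      exact Relation.ReflTransGen.tail (ih fun t ht => h t (by omega)) (h n (by omega))

/-- In a graph in which every edge is a bridge, non-backtracking walks are injective. -/
lemma nb_inj {G : SGraph V} (hbr : ∀ u v, G.adj u v → IsBridge G u v)
    {f : ℕ → V} {k : ℕ} (hf : IsNB G f k) :
    ∀ i j, i ≤ k → j ≤ k → f i = f j → i = j := by
  classical
  by_contra hcon
  push_neg at hcon
  obtain ⟨i, j, hik, hjk, hfeq, hij⟩ := hcon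
  have hex : ∃ d, 0 < d ∧ ∃ s, s + d ≤ k ∧ f (s + d) = f s := by
    rcases Nat.lt_or_ge i j with h | h
    · exact ⟨j - i, by omega, i, by omega, by rw [show i + (j - i) = j by omega]; exact hfeq.symm⟩
    · have : i > j := by omega
      exact ⟨i - j, by omega, j, by omega, by rw [show j + (i - j) = i by omega]; exact hfeq⟩
  set d0 := Nat.find hex with hd0def
  obtain ⟨hd0pos, s, hsk, hs⟩ := Nat.find_spec hex
  have hmin : ∀ s' d', 0 < d' → d' < d0 → s' + d' ≤ k → f (s' + d') ≠ f s' := by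
    intro s' d' h1 h2 h3 heq
    exact Nat.find_min hex h2 ⟨h1, s', h3, heq⟩
  have hd1 : d0 ≠ 1 := by
    intro h
    have hadj := hf.1 s (by omega)
    rw [show s + 1 = s + d0 by omega, hs] at hadj
    exact G.loopless _ hadj
  have hd2 : d0 ≠ 2 := by
    intro h
    exact hf.2 s (by omega) (by rw [show s + 2 = s + d0 by omega]; exact hs)
  have hd3 : 3 ≤ d0 := by omega
  -- facts about the segment
  have fact1 : ∀ t, s < t → t < s + d0 → f t ≠ f s := by
    intro t h1 h2 heq
    exact hmin s (t - s) (by omega) (by omega) (by omega)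
      (by rw [show s + (t - s) = t by omega]; exact heq)
  have fact2 : ∀ t, s + 1 ≤ t → t ≤ s + d0 - 1 → f t = f (s + 1) → t = s + 1 := by
    intro t h1 h2 heq
    by_contra hne
    exact hmin (s + 1) (t - (s + 1)) (by omega) (by omega) (by omega)
      (by rw [show s + 1 + (t - (s + 1)) = t by omega]; exact heq)
  have fact3 : f (s + 2) ≠ f s := hf.2 s (by omega)
  -- the backward chain from f s = f (s+d0) to f (s+1)
  have hadj01 := hf.1 s (by omega)
  apply hbr (f s) (f (s + 1)) hadj01
  have hchain : Relation.ReflTransGen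
      (fun a c => G.adj a c ∧ ¬((a = f s ∧ c = f (s + 1)) ∨ (a = f (s + 1) ∧ c = f s)))
      (f (s + d0)) (f (s + 1)) := by
    have := rtg_chain (R := fun a c => G.adj a c ∧
        ¬((a = f s ∧ c = f (s + 1)) ∨ (a = f (s + 1) ∧ c = f s)))
      (fun t => f (s + d0 - t)) (d0 - 1) ?_
    · simpa [show s + d0 - (d0 - 1) = s + 1 by omega] using this
    · intro t ht
      have hu : s + d0 - (t + 1) = (s + d0 - t) - 1 := by omega
      set u := s + d0 - t - 1 with hudef
      have hu1 : s + 1 ≤ u := by omega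
      have hu2 : u ≤ s + d0 - 1 := by omega
      have he1 : s + d0 - t = u + 1 := by omega
      have he2 : s + d0 - (t + 1) = u := by omega
      simp only [he1, he2]
      refine ⟨G.symm _ _ (hf.1 u (by omega)), ?_⟩
      rintro (⟨h1, h2⟩ | ⟨h1, h2⟩)
      · -- f (u+1) = f s ∧ f u = f (s+1)
        have husub := fact2 u hu1 hu2 h2
        apply fact3
        rw [show s + 2 = u + 1 by omega]
        exact h1
      · -- f (u+1) = f (s+1) ∧ f u = f s
        exact fact1 u (by omega) (by omega) h2
  exact hs ▸ hchain

/-- In a graph in which every edge is a bridge, a non-backtracking walk is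
determined by its endpoints. -/
lemma nb_unique {G : SGraph V} (hbr : ∀ u v, G.adj u v → IsBridge G u v) :
    ∀ (k : ℕ) (f g : ℕ → V) (l : ℕ), IsNB G f k → IsNB G g l →
      f 0 = g 0 → f k = g l → k = l ∧ ∀ j, j ≤ k → f j = g j := by
  intro k
  induction k with
  | zero =>
      intro f g l hf hg h0 hk
      have : l = 0 := (nb_inj hbr hg l 0 le_rfl (by omega) (by rw [← hk, ← h0])).symm ▸
        (nb_inj hbr hg l 0 le_rfl (by omega) (by rw [← hk, ← h0]))
      refine ⟨this.symm, ?_⟩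
      intro j hj
      interval_cases j
      exact h0
  | succ k ih =>
      intro f g l hf hg h0 hk
      rcases Nat.eq_zero_or_pos l with hl0 | hlpos
      · subst hl0
        have : k + 1 = 0 := nb_inj hbr hf (k + 1) 0 le_rfl (by omega) (by rw [hk, ← h0])
        omega
      -- show f 1 = g 1
      have If := nb_inj hbr hf
      have Ig := nb_inj hbr hg
      have h1 : f 1 = g 1 := by
        by_contra hne
        apply hbr (f 0) (f 1) (hf.1 0 (by omega))
        have hchain : Relation.ReflTransGen
            (fun a c => G.adj a c ∧ ¬((a = f 0 ∧ c = f 1) ∨ (a = f 1 ∧ c = f 0)))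
            ((fun t => if t ≤ l then g t else f (k + 1 + l - t)) 0)
            ((fun t => if t ≤ l then g t else f (k + 1 + l - t)) (l + k)) := by
          refine rtg_chain (fun t => if t ≤ l then g t else f (k + 1 + l - t)) (l + k) ?_
          intro t ht
          beta_reduce
          rcases Nat.lt_or_ge t l with htl | htl
          · -- g-steps
            simp only [if_pos (by omega : t ≤ l), if_pos (by omega : t + 1 ≤ l)]
            refine ⟨hg.1 t htl, ?_⟩
            rintro (⟨ha, hc⟩ | ⟨ha, hc⟩)
            · have : t = 0 := Ig t 0 (by omega) (by omega) (by rw [ha, h0])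
              subst this
              exact hne (hc.symm)
            · have : t + 1 = 0 := Ig (t + 1) 0 (by omega) (by omega) (by rw [hc, h0])
              omega
          · -- reversed f-steps
            have hu1 : 1 ≤ k + l - t := by omega
            have hu2 : k + l - t ≤ k := by omega
            set u := k + l - t with hudef
            have hstep1 : (if t ≤ l then g t else f (k + 1 + l - t)) = f (u + 1) := by
              rcases Nat.eq_or_lt_of_le htl with hteq | htlt
              · rw [if_pos (by omega : t ≤ l)]
                rw [← hteq] at hudef ⊢
                rw [show u + 1 = k + 1 by omega]
                exact hk.symm
              · rw [if_neg (by omega : ¬ t ≤ l), show k + 1 + l - t = u + 1 by omega]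
            have hstep2 : (if t + 1 ≤ l then g (t + 1) else f (k + 1 + l - (t + 1))) = f u := by
              rw [if_neg (by omega : ¬ t + 1 ≤ l), show k + 1 + l - (t + 1) = u by omega]
            rw [hstep1, hstep2]
            refine ⟨G.symm _ _ (hf.1 u (by omega)), ?_⟩
            rintro (⟨ha, hc⟩ | ⟨ha, hc⟩)
            · have : u + 1 = 0 := If (u + 1) 0 (by omega) (by omega) ha
              omega
            · have : u = 0 := If u 0 (by omega) (by omega) hc
              omega
        have h00 : (fun t => if t ≤ l then g t else f (k + 1 + l - t)) 0 = f 0 := by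
          show (if (0:ℕ) ≤ l then g 0 else f (k + 1 + l - 0)) = f 0
          rw [if_pos (Nat.zero_le l)]
          exact h0.symm
        have hend : (fun t => if t ≤ l then g t else f (k + 1 + l - t)) (l + k) = f 1 := by
          show (if l + k ≤ l then g (l + k) else f (k + 1 + l - (l + k))) = f 1
          rcases Nat.eq_zero_or_pos k with hk0 | hkpos
          · subst hk0
            rw [if_pos (by omega : l + 0 ≤ l), Nat.add_zero, ← hk]
          · rw [if_neg (by omega : ¬ l + k ≤ l), show k + 1 + l - (l + k) = 1 by omega]
        rw [h00, hend] at hchain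
        exact hchain
      -- apply induction hypothesis to the shifted walks
      obtain ⟨l', rfl⟩ : ∃ l', l = l' + 1 := ⟨l - 1, by omega⟩
      obtain ⟨hkl, hcoe⟩ := ih (fun t => f (t + 1)) (fun t => g (t + 1)) l'
        hf.shift hg.shift h1 hk
      refine ⟨by omega, ?_⟩
      intro j hj
      rcases Nat.eq_zero_or_pos j with rfl | hjpos
      · exact h0
      · have := hcoe (j - 1) (by omega)
        simpa [show j - 1 + 1 = j by omega] using this

section TrailAnalysis

variable {G : SGraph V} {w0 : V → V → ℕ} {b : Burst V}

lemma posStep_wait0 {i : Fin b.m} {p' : SolPos V}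
    (h : PosStep G b i (SolPos.wait 0) p') : p' = SolPos.wait 0 := by
  rcases h with ⟨_, h⟩ | ⟨h, _⟩ | ⟨k, h, _⟩ | ⟨n, h, _⟩ <;> first
    | exact h
    | (exfalso; simp at h)

lemma posStep_wait1 {i : Fin b.m} {p' : SolPos V}
    (h : PosStep G b i (SolPos.wait 1) p') : p' = SolPos.node (b.entry i) := by
  rcases h with ⟨h, _⟩ | ⟨_, h⟩ | ⟨k, h, _⟩ | ⟨n, h, _⟩ <;> first
    | exact h
    | (exfalso; simp at h)

lemma posStep_wait2 {i : Fin b.m} {p' : SolPos V} {k : ℕ}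
    (h : PosStep G b i (SolPos.wait (k + 2)) p') : p' = SolPos.wait (k + 1) := by
  rcases h with ⟨h, _⟩ | ⟨h, _⟩ | ⟨k', h, h2⟩ | ⟨n, h, _⟩
  · exfalso; simp at h
  · exfalso; simp at h
  · have : k' = k := by simpa using h.symm
    rw [this] at h2; exact h2
  · exfalso; simp at h

lemma posStep_node {i : Fin b.m} {p' : SolPos V} {n : V}
    (h : PosStep G b i (SolPos.node n) p') :
    (n = b.exit i ∧ p' = SolPos.wait 0) ∨ ∃ n', G.adj n n' ∧ p' = SolPos.node n' := by
  rcases h with ⟨h, _⟩ | ⟨h, _⟩ | ⟨k, h, _⟩ | ⟨n', h, h2⟩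
  · exfalso; simp at h
  · exfalso; simp at h
  · exfalso; simp at h
  · have : n' = n := by simpa using h.symm
    subst this
    rcases h2 with ⟨h2, h3⟩ | ⟨m, hm1, hm2⟩
    · exact Or.inl ⟨h2, h3⟩
    · exact Or.inr ⟨m, hm1, hm2⟩

/-- Description of the trajectory of a single soliton in a total legal trail:
it waits until its arrival time, then follows a non-backtracking walk from its
entry node to its exit node, and then has left the graph. -/
lemma trail_desc {len : ℕ} {cfg : Fin (len + 1) → Config V b.m}
    (ht : IsTotalLegalTrail G w0 b len cfg) (i : Fin b.m) :
    ∃ (k : ℕ) (f : ℕ → V), IsNB G f k ∧ f 0 = b.entry i ∧ f k = b.exit i ∧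
      b.arrival i + k < len ∧
      ∀ j (hj : j ≤ len), (cfg ⟨j, Nat.lt_succ_of_le hj⟩).2 i =
        (if j < b.arrival i then SolPos.wait (b.arrival i - j)
         else if j ≤ b.arrival i + k then SolPos.node (f (j - b.arrival i))
         else SolPos.wait 0) := by
  classical
  obtain ⟨⟨⟨hw0, hπ0, hsteps, _hmove1, htwo, _hnf⟩, _hlegal⟩, hfin⟩ := ht
  set a := b.arrival i with hadef
  -- positions as a total function of time
  set pos : ℕ → SolPos V :=
    fun j => (cfg ⟨min j len, Nat.lt_succ_of_le (min_le_right _ _)⟩).2 i with hposdef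
  have posEq : ∀ j (hj : j ≤ len), pos j = (cfg ⟨j, Nat.lt_succ_of_le hj⟩).2 i := by
    intro j hj
    simp only [hposdef, min_eq_left hj]
  have hstep' : ∀ j, j < len → PosStep G b i (pos j) (pos (j + 1)) := by
    intro j hj
    rw [posEq j (by omega), posEq (j + 1) (by omega)]
    exact (hsteps j hj).1 i
  have hNBstep : ∀ j, j + 2 ≤ len → pos (j + 2) ≠ SolPos.wait 0 → pos (j + 2) ≠ pos j := by
    intro j hj hnw
    rw [posEq (j + 2) (by omega)] at hnw
    rw [posEq (j + 2) (by omega), posEq j (by omega)]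
    exact ((htwo j hj i).2.2.2 hnw).2
  have hfin' : pos len = SolPos.wait 0 := by
    rw [posEq len le_rfl]
    exact hfin i
  have hpos0 : pos 0 = initPos b i := by
    rw [posEq 0 (by omega)]
    exact congrFun hπ0 i
  -- waiting phase
  have hW : ∀ j, j ≤ a → j ≤ len →
      pos j = if j = a then SolPos.node (b.entry i) else SolPos.wait (a - j) := by
    intro j
    induction j with
    | zero =>
        intro _ _
        rw [hpos0]
        unfold initPos
        rcases Nat.eq_zero_or_pos a with ha | ha
        · rw [if_pos (show b.arrival i = 0 by omega), if_pos (show (0:ℕ) = a by omega)]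
        · rw [if_neg (show ¬ b.arrival i = 0 by omega), if_neg (show ¬ (0:ℕ) = a by omega),
            Nat.sub_zero, hadef]
    | succ j ihj =>
        intro hja hjl
        have h1 := ihj (by omega) (by omega)
        rw [if_neg (by omega : ¬ j = a)] at h1
        have hstep := hstep' j (by omega)
        rw [h1] at hstep
        rcases Nat.lt_or_ge (j + 1) a with hlt | hge
        · have : a - j = (a - (j + 2)) + 2 := by omega
          rw [this] at hstep
          rw [if_neg (by omega : ¬ j + 1 = a), posStep_wait2 hstep]
          congr 1
          omega
        · have hja1 : j + 1 = a := by omega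
          have : a - j = 1 := by omega
          rw [this] at hstep
          rw [if_pos hja1, posStep_wait1 hstep]
  -- arrival before the end
  have halen : a ≤ len := by
    by_contra hcon
    have := hW len (by omega) le_rfl
    rw [if_neg (by omega), hfin'] at this
    have : a - len = 0 := by simpa using this.symm
    omega
  have hposa : pos a = SolPos.node (b.entry i) := by
    rw [hW a le_rfl halen, if_pos rfl]
  have halt : a < len := by
    rcases Nat.eq_or_lt_of_le halen with h | h
    · exfalso
      rw [h, hfin'] at hposa
      simp at hposa
    · exact h
  -- first time the soliton has left
  have hdex : ∃ j, pos j = SolPos.wait 0 := ⟨len, hfin'⟩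
  set d := Nat.find hdex with hddef
  have hd : pos d = SolPos.wait 0 := Nat.find_spec hdex
  have hdmin : ∀ j, j < d → pos j ≠ SolPos.wait 0 := fun j hj => Nat.find_min hdex hj
  have hdlen : d ≤ len := Nat.find_min' hdex hfin'
  have had : a < d := by
    by_contra hcon
    have hda : d ≤ a := by omega
    have := hW d hda (by omega)
    rw [this] at hd
    split at hd
    · simp at hd
    · have : a - d = 0 := by simpa using hd
      omega
  -- node phase
  have hNode : ∀ j, a ≤ j → j < d → ∃ n, pos j = SolPos.node n := by
    intro j hja
    induction j, hja using Nat.le_induction with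
    | base => exact fun _ => ⟨b.entry i, hposa⟩
    | succ j hja ihj =>
        intro hjd
        obtain ⟨n, hn⟩ := ihj (by omega)
        have hstep := hstep' j (by omega)
        rw [hn] at hstep
        rcases posStep_node hstep with ⟨_, h2⟩ | ⟨n', _, h2⟩
        · exact absurd h2 (hdmin (j + 1) hjd)
        · exact ⟨n', h2⟩
  set k := d - 1 - a with hkdef
  have hak : a + k + 1 = d := by omega
  -- the walk
  set f : ℕ → V := fun s =>
    match pos (a + min s k) with
    | SolPos.node n => n
    | SolPos.wait _ => b.entry i with hfdef
  have hfNode : ∀ s, s ≤ k → pos (a + s) = SolPos.node (f s) := by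
    intro s hs
    obtain ⟨n, hn⟩ := hNode (a + s) (by omega) (by omega)
    have : f s = n := by
      simp only [hfdef, min_eq_left hs, hn]
    rw [this, hn]
  have hNBf : IsNB G f k := by
    constructor
    · intro s hs
      have h1 := hfNode s (by omega)
      have h2 := hfNode (s + 1) (by omega)
      have hstep := hstep' (a + s) (by omega)
      rw [h1] at hstep
      rcases posStep_node hstep with ⟨_, hw⟩ | ⟨n', hadj, hw⟩
      · rw [show a + s + 1 = a + (s + 1) by omega, h2] at hw
        simp at hw
      · rw [show a + s + 1 = a + (s + 1) by omega, h2] at hw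
        have : f (s + 1) = n' := by simpa using hw
        rw [this]
        exact hadj
    · intro s hs
      have h0 := hfNode s (by omega)
      have h2 := hfNode (s + 2) (by omega)
      have := hNBstep (a + s) (by omega) (by rw [show a + s + 2 = a + (s + 2) by omega, h2]; simp)
      rw [show a + s + 2 = a + (s + 2) by omega, h2, h0] at this
      intro heq
      exact this (by rw [heq])
  have hf0 : f 0 = b.entry i := by
    have := hfNode 0 (by omega)
    rw [Nat.add_zero, hposa] at this
    simpa using this.symm
  have hfk : f k = b.exit i := by
    have h1 := hfNode k le_rfl
    have hstep := hstep' (a + k) (by omega)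
    rw [h1] at hstep
    rcases posStep_node hstep with ⟨h2, _⟩ | ⟨n', _, hw⟩
    · exact h2
    · exfalso
      rw [show a + k + 1 = d by omega, hd] at hw
      simp at hw
  -- after leaving
  have hAfter : ∀ j, d ≤ j → j ≤ len → pos j = SolPos.wait 0 := by
    intro j hdj
    induction j, hdj using Nat.le_induction with
    | base => exact fun _ => hd
    | succ j hdj ihj =>
        intro hjl
        have hstep := hstep' j (by omega)
        rw [ihj (by omega)] at hstep
        exact posStep_wait0 hstep
  refine ⟨k, f, hNBf, hf0, hfk, by omega, ?_⟩
  intro j hj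
  rw [← posEq j hj]
  rcases Nat.lt_or_ge j a with h1 | h1
  · rw [if_pos h1, hW j (by omega) hj, if_neg (by omega)]
  · rw [if_neg (by omega)]
    rcases le_or_gt j (a + k) with h2 | h2
    · rw [if_pos h2]
      have := hfNode (j - a) (by omega)
      rw [show a + (j - a) = j by omega] at this
      exact this
    · rw [if_neg (by omega)]
      exact hAfter j (by omega) hj

/-- In a graph in which every edge is a bridge, the positions in a total legal
trail are uniquely determined. -/
lemma pos_determined (hbr : ∀ u v, G.adj u v → IsBridge G u v)
    {len len' : ℕ} {cfg : Fin (len + 1) → Config V b.m}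
    {cfg' : Fin (len' + 1) → Config V b.m}
    (ht : IsTotalLegalTrail G w0 b len cfg) (ht' : IsTotalLegalTrail G w0 b len' cfg')
    (j : ℕ) (hj : j ≤ len) (hj' : j ≤ len') :
    (cfg ⟨j, Nat.lt_succ_of_le hj⟩).2 = (cfg' ⟨j, Nat.lt_succ_of_le hj'⟩).2 := by
  funext i
  obtain ⟨k, f, hNBf, hf0, hfk, hklen, hdesc⟩ := trail_desc ht i
  obtain ⟨k', g, hNBg, hg0, hgk, hklen', hdesc'⟩ := trail_desc ht' i
  obtain ⟨hkk, hfg⟩ := nb_unique hbr k f g k' hNBf hNBg (hf0.trans hg0.symm)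
    (by rw [hfk, hgk])
  rw [hdesc j hj, hdesc' j hj', ← hkk]
  split_ifs with h1 h2
  · rfl
  · rw [hfg (j - b.arrival i) (by omega)]
  · rfl

end TrailAnalysis

/-- An indecomposable soliton graph whose underlying graph is a tree
is strongly deterministic: for every set `B` of bursts for `G`, every state
`G' ∈ States(G,B)` and every `b ∈ B` there is at most one total legal
configuration trail. -/
theorem tree_strongly_deterministic {V : Type} [Finite V]
    (G : SGraph V) (w : V → V → ℕ)
    (hsol : IsSolitonGraph G w) (hind : Indecomposable G w)
    (htree : IsTreeG G) :
    ∀ B : Set (Burst V), (∀ b ∈ B, IsBurstFor G b) → StronglyDet G w B := by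
  intro B _hB w' _hw' b _hbB t t' ht ht'
  obtain ⟨len, cfg⟩ := t
  obtain ⟨len', cfg'⟩ := t'
  have hbr := htree.2
  have ht : IsTotalLegalTrail G w' b len cfg := ht
  have ht' : IsTotalLegalTrail G w' b len' cfg' := ht'
  have hposeq := fun (j : ℕ) (hj : j ≤ len) (hj' : j ≤ len') =>
    pos_determined hbr ht ht' j hj hj'
  -- the lengths agree
  have hlen : len = len' := by
    by_contra hne
    rcases Nat.lt_or_ge len len' with hlt | hge
    · apply ht'.1.1.2.2.2.2.2 len hlt
      intro i
      have := congrFun (hposeq len le_rfl (by omega)) i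
      rw [← this]
      exact ht.2 i
    · have hlt : len' < len := by omega
      apply ht.1.1.2.2.2.2.2 len' hlt
      intro i
      have := congrFun (hposeq len' (by omega) le_rfl) i
      rw [this]
      exact ht'.2 i
  subst hlen
  -- the weights agree
  have hweq : ∀ (j : ℕ) (hj : j ≤ len),
      (cfg ⟨j, Nat.lt_succ_of_le hj⟩).1 = (cfg' ⟨j, Nat.lt_succ_of_le hj⟩).1 := by
    intro j
    induction j with
    | zero =>
        intro _
        have h1 : (cfg 0).1 = w' := ht.1.1.1
        have h2 : (cfg' 0).1 = w' := ht'.1.1.1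
        exact h1.trans h2.symm
    | succ j ihj =>
        intro hj
        have hww := (ht.1.1.2.2.1 j (by omega)).2
        have hww' := (ht'.1.1.2.2.1 j (by omega)).2
        have e1 := hposeq j (by omega) (by omega)
        have e2 := hposeq (j + 1) hj hj
        funext p q
        by_cases hm : (MovesAlong (cfg ⟨j, by omega⟩).2 (cfg ⟨j + 1, by omega⟩).2 p q ∨
            MovesAlong (cfg ⟨j, by omega⟩).2 (cfg ⟨j + 1, by omega⟩).2 q p)
        · have hm' : (MovesAlong (cfg' ⟨j, by omega⟩).2 (cfg' ⟨j + 1, by omega⟩).2 p q ∨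
              MovesAlong (cfg' ⟨j, by omega⟩).2 (cfg' ⟨j + 1, by omega⟩).2 q p) := by
            rw [← e1, ← e2]
            exact hm
          rw [(hww p q).1 hm, (hww' p q).1 hm', ihj (by omega)]
        · have hm' : ¬ (MovesAlong (cfg' ⟨j, by omega⟩).2 (cfg' ⟨j + 1, by omega⟩).2 p q ∨
              MovesAlong (cfg' ⟨j, by omega⟩).2 (cfg' ⟨j + 1, by omega⟩).2 q p) := by
            rw [← e1, ← e2]
            exact hm
          rw [(hww p q).2 hm, (hww' p q).2 hm', ihj (by omega)]
  -- conclusion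
  have hcfg : cfg = cfg' := by
    funext j
    have hj : (j : ℕ) ≤ len := Nat.lt_succ_iff.mp j.isLt
    have h1 := hweq j hj
    have h2 := hposeq j hj hj
    have hjeta : j = ⟨(j : ℕ), Nat.lt_succ_of_le hj⟩ := by
      apply Fin.ext
      rfl
    rw [hjeta]
    exact Prod.ext h1 h2
  rw [hcfg]

end Soliton
end

section
/- Let G=(N,E,w) be a soliton graph whose underlying graph (N,E) is a tree, let b be a burst for G, and let C be a total legal configuration trail for G and b. Then the soliton path of every soliton i in C is a simple path (no node occurs more than once), and hence equals the unique simple path in the tree from the entry node n_i to the exit node n_i' of soliton i. -/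
/- Formalization of multi-soliton automata (Bordihn–Schulz),
   following the definitions of the paper. -/

namespace Soliton

variable {V : Type}

/-- In a graph all of whose edges are bridges, a non-backtracking walk is
injective. -/
lemma nobacktrack_inj (G : SGraph V) (hbr : ∀ u v, G.adj u v → IsBridge G u v)
    (f : ℕ → V) (r : ℕ)
    (hadj : ∀ j, j + 1 ≤ r → G.adj (f j) (f (j+1)))
    (hnb : ∀ j, j + 2 ≤ r → f (j+2) ≠ f j) :
    ∀ x y, x ≤ r → y ≤ r → f x = f y → x = y := by
  classical
  by_contra hcon
  push_neg at hcon
  obtain ⟨x, y, hx, hy, hfxy, hxy⟩ := hcon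
  -- wlog x < y
  have hP : ∃ d, 0 < d ∧ ∃ a, a + d ≤ r ∧ f a = f (a + d) := by
    rcases lt_or_gt_of_ne hxy with h | h
    · exact ⟨y - x, by omega, x, by omega, by rw [hfxy]; congr 1; omega⟩
    · exact ⟨x - y, by omega, y, by omega, by rw [← hfxy]; congr 1; omega⟩
  set P : ℕ → Prop := fun d => 0 < d ∧ ∃ a, a + d ≤ r ∧ f a = f (a + d) with hPdef
  obtain ⟨d, hd⟩ := hP
  have hPd : P d := hd
  obtain ⟨hd0pos, a, har, hfa⟩ := Nat.find_spec ⟨d, hPd⟩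
  set d0 := Nat.find (⟨d, hPd⟩ : ∃ d, P d) with hd0def
  have hmin : ∀ e, e < d0 → ¬ P e := fun e he => Nat.find_min _ he
  -- injectivity inside the minimal cycle
  have hinj : ∀ u v, a ≤ u → u < v → v ≤ a + d0 → v - u < d0 → f u ≠ f v := by
    intro u v hu huv hv hvu hne
    exact hmin (v - u) hvu ⟨by omega, u, by omega, by rw [hne]; congr 1; omega⟩
  have hd1 : d0 ≠ 1 := by
    intro h
    have := hadj a (by omega)
    rw [h] at hfa
    rw [← hfa] at this
    exact G.loopless _ this
  have hd2 : d0 ≠ 2 := by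
    intro h
    rw [h] at hfa
    exact hnb a (by omega) hfa.symm
  have hd3 : 3 ≤ d0 := by omega
  -- the avoided-edge relation
  set rel : V → V → Prop := fun x y =>
    G.adj x y ∧ ¬((x = f a ∧ y = f (a+1)) ∨ (x = f (a+1) ∧ y = f a)) with hrel
  have key : ∀ e, e ≤ d0 - 1 → Relation.ReflTransGen rel (f (a + d0)) (f (a + d0 - e)) := by
    intro e
    induction e with
    | zero => intro _; exact Relation.ReflTransGen.refl
    | succ e ih =>
      intro he
      have hchain := ih (by omega)
      set j := a + d0 - e - 1 with hj
      have hj1 : a + 1 ≤ j := by omega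
      have hj2 : j + 1 ≤ r := by omega
      have hj3 : a + d0 - e = j + 1 := by omega
      have hj4 : a + d0 - (e + 1) = j := by omega
      rw [hj3] at hchain
      rw [hj4]
      refine hchain.tail ?_
      rw [hrel]
      constructor
      · exact G.symm _ _ (hadj j hj2)
      · rintro (⟨h1, h2⟩ | ⟨h1, h2⟩)
        · -- f (j+1) = f a and f j = f (a + 1)
          by_cases hja : j + 1 = a + d0
          · exact hinj (a+1) j (by omega) (by omega) (by omega) (by omega)
              (by rw [h2])
          · exact hinj (j+1) (a + d0) (by omega) (by omega) (by omega) (by omega)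
              (by rw [h1, hfa])
        · -- f j = f a, impossible
          exact hinj j (a + d0) (by omega) (by omega) (by omega) (by omega)
            (by rw [h2, hfa])
  have hchain := key (d0 - 1) le_rfl
  have h1 : a + d0 - (d0 - 1) = a + 1 := by omega
  rw [h1, ← hfa] at hchain
  exact hbr (f a) (f (a+1)) (hadj a (by omega)) hchain

/-- In a graph all of whose edges are bridges, simple paths between two nodes
are unique. -/
lemma unique_simple_path (G : SGraph V) (hbr : ∀ u v, G.adj u v → IsBridge G u v) :
    ∀ (k1 k2 : ℕ) (p q : ℕ → V),
    (∀ x y, x ≤ k1 → y ≤ k1 → p x = p y → x = y) →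
    (∀ x y, x ≤ k2 → y ≤ k2 → q x = q y → x = y) →
    (∀ j, j + 1 ≤ k1 → G.adj (p j) (p (j+1))) →
    (∀ j, j + 1 ≤ k2 → G.adj (q j) (q (j+1))) →
    p 0 = q 0 → p k1 = q k2 → k1 = k2 ∧ ∀ j ≤ k1, p j = q j := by
  intro k1
  induction k1 with
  | zero =>
    intro k2 p q hip hiq hap haq h0 hlast
    have hk2 : k2 = 0 := hiq k2 0 le_rfl (Nat.zero_le _) (by rw [← hlast]; exact h0)
    refine ⟨hk2.symm, ?_⟩
    intro j hj
    have : j = 0 := by omega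
    subst this
    exact h0
  | succ k ih =>
    intro k2 p q hip hiq hap haq h0 hlast
    have hk2 : k2 ≠ 0 := by
      intro h
      subst h
      have : k + 1 = 0 := hip (k+1) 0 le_rfl (Nat.zero_le _) (by rw [hlast, ← h0])
      omega
    obtain ⟨k2', rfl⟩ : ∃ k2', k2 = k2' + 1 := ⟨k2 - 1, by omega⟩
    have hpq1 : p 1 = q 1 := by
      by_contra hne
      set rel : V → V → Prop := fun x y =>
        G.adj x y ∧ ¬((x = p 0 ∧ y = p 1) ∨ (x = p 1 ∧ y = p 0)) with hrel
      -- chain from q 0 up along q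
      have chain1 : ∀ e, e ≤ k2' + 1 → Relation.ReflTransGen rel (q 0) (q e) := by
        intro e
        induction e with
        | zero => intro _; exact Relation.ReflTransGen.refl
        | succ e ihe =>
          intro he
          refine (ihe (by omega)).tail ?_
          rw [hrel]
          constructor
          · exact haq e (by omega)
          · rintro (⟨h1, h2⟩ | ⟨h1, h2⟩)
            · -- q e = p 0 = q 0 ⇒ e = 0, then q 1 = p 1 contradiction
              have he0 : e = 0 := hiq e 0 (by omega) (Nat.zero_le _) (by rw [h1, h0])
              subst he0
              norm_num at h2
              exact hne h2.symm
            · -- q (e+1) = p 0 = q 0 ⇒ e + 1 = 0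
              have : e + 1 = 0 := hiq (e+1) 0 (by omega) (Nat.zero_le _) (by rw [h2, h0])
              omega
      -- chain from p (k+1) down along p
      have chain2 : ∀ e, e ≤ k → Relation.ReflTransGen rel (p (k+1)) (p (k+1-e)) := by
        intro e
        induction e with
        | zero => intro _; exact Relation.ReflTransGen.refl
        | succ e ihe =>
          intro he
          have hch := ihe (by omega)
          set j := k - e with hj
          have hj1 : 1 ≤ j := by omega
          have h1 : k + 1 - e = j + 1 := by omega
          have h2 : k + 1 - (e + 1) = j := by omega
          rw [h1] at hch
          rw [h2]
          refine hch.tail ?_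
          rw [hrel]
          constructor
          · exact G.symm _ _ (hap j (by omega))
          · rintro (⟨ha, hb⟩ | ⟨ha, hb⟩)
            · have : j + 1 = 0 := hip (j+1) 0 (by omega) (Nat.zero_le _) ha
              omega
            · have : j = 0 := hip j 0 (by omega) (Nat.zero_le _) hb
              omega
      have hfull : Relation.ReflTransGen rel (p 0) (p 1) := by
        have c1 := chain1 (k2' + 1) le_rfl
        have c2 := chain2 k le_rfl
        have hk1 : k + 1 - k = 1 := by omega
        rw [hk1] at c2
        rw [hlast] at c2
        rw [h0]
        exact c1.trans c2
      exact hbr (p 0) (p 1) (hap 0 (by omega)) hfull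
    -- apply the induction hypothesis to the shifted paths
    obtain ⟨hkeq, hvals⟩ := ih k2' (fun j => p (j+1)) (fun j => q (j+1))
      (fun x y hx hy hxy => by
        have := hip (x+1) (y+1) (by omega) (by omega) hxy; omega)
      (fun x y hx hy hxy => by
        have := hiq (x+1) (y+1) (by omega) (by omega) hxy; omega)
      (fun j hj => hap (j+1) (by omega))
      (fun j hj => haq (j+1) (by omega))
      hpq1 hlast
    refine ⟨by omega, ?_⟩
    intro j hj
    cases j with
    | zero => exact h0
    | succ j => exact hvals j (by omega)

/-- The position of soliton `i` at time `j`, as a function of a natural number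
time (positions after the end of the trail count as `wait 0`). -/
noncomputable def posAt {m len : ℕ} (cfg : Fin (len + 1) → Config V m) (i : Fin m)
    (j : ℕ) : SolPos V :=
  if h : j ≤ len then (cfg ⟨j, by omega⟩).2 i else SolPos.wait 0

lemma posAt_eq {m len : ℕ} (cfg : Fin (len + 1) → Config V m) (i : Fin m)
    (j : ℕ) (h : j ≤ len) : posAt cfg i j = (cfg ⟨j, by omega⟩).2 i := dif_pos h

/-- In a soliton graph whose underlying graph is a tree, in every
total legal configuration trail the soliton path of every soliton is simple (it
visits no node twice), and hence equals the unique simple path in the tree from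
its entry node to its exit node. -/
theorem tree_soliton_path_simple {V : Type} [Finite V]
    (G : SGraph V) (w : V → V → ℕ)
    (hsol : IsSolitonGraph G w) (htree : IsTreeG G)
    (b : Burst V) (hb : IsBurstFor G b)
    (len : ℕ) (cfg : Fin (len + 1) → Config V b.m)
    (hC : IsTotalLegalTrail G w b len cfg) :
    ∀ i : Fin b.m,
      (∀ (j₁ j₂ : Fin (len + 1)) (p : V),
        (cfg j₁).2 i = SolPos.node p → (cfg j₂).2 i = SolPos.node p → j₁ = j₂) ∧
      (∀ (k : ℕ) (q : Fin (k + 1) → V), Function.Injective q →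
        q 0 = b.entry i → q (Fin.last k) = b.exit i →
        (∀ j : Fin k, G.adj (q j.castSucc) (q j.succ)) →
        ∃ (s : ℕ) (hsk : s + k ≤ len),
          (∀ j : Fin (k + 1),
            (cfg ⟨s + (j : ℕ), by have := j.isLt; omega⟩).2 i = SolPos.node (q j)) ∧
          (∀ j : Fin (len + 1), ((j : ℕ) < s ∨ s + k < (j : ℕ)) →
            ∀ p : V, (cfg j).2 i ≠ SolPos.node p)) := by
  classical
  obtain ⟨⟨⟨hw0, hinit, hstep, hfirst, htwo, hnfin⟩, hlegal⟩, hfin⟩ := hC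
  intro i
  -- basic facts about positions
  have hfin' : posAt cfg i len = SolPos.wait 0 := by
    rw [posAt_eq cfg i len le_rfl]
    exact hfin i
  have hfin2 : ∀ j, len < j → posAt cfg i j = SolPos.wait 0 := by
    intro j h
    exact dif_neg (by omega)
  have Pstep : ∀ j, j < len → PosStep G b i (posAt cfg i j) (posAt cfg i (j+1)) := by
    intro j h
    rw [posAt_eq cfg i j (by omega), posAt_eq cfg i (j+1) (by omega)]
    exact (hstep j h).1 i
  have FW0 : ∀ j, j < len → posAt cfg i j = SolPos.wait 0 →
      posAt cfg i (j+1) = SolPos.wait 0 := by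
    intro j h hj
    rcases Pstep j h with ⟨_, h2⟩ | ⟨h1, _⟩ | ⟨k, h1, _⟩ | ⟨n, h1, _⟩
    · exact h2
    · rw [hj] at h1; simp at h1
    · rw [hj] at h1; simp at h1
    · rw [hj] at h1; simp at h1
  have FW2 : ∀ j k, j < len → posAt cfg i j = SolPos.wait (k+2) →
      posAt cfg i (j+1) = SolPos.wait (k+1) := by
    intro j k h hj
    rcases Pstep j h with ⟨h1, _⟩ | ⟨h1, _⟩ | ⟨k', h1, h2⟩ | ⟨n, h1, _⟩
    · rw [hj] at h1; simp at h1
    · rw [hj] at h1; simp at h1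
    · rw [hj] at h1
      have : k' = k := by
        injection h1 with h'; omega
      subst this
      exact h2
    · rw [hj] at h1; simp at h1
  have FW1 : ∀ j, j < len → posAt cfg i j = SolPos.wait 1 →
      posAt cfg i (j+1) = SolPos.node (b.entry i) := by
    intro j h hj
    rcases Pstep j h with ⟨h1, _⟩ | ⟨_, h2⟩ | ⟨k', h1, _⟩ | ⟨n, h1, _⟩
    · rw [hj] at h1; simp at h1
    · exact h2
    · rw [hj] at h1; injection h1 with h'; omega
    · rw [hj] at h1; simp at h1
  have FN : ∀ j n, j < len → posAt cfg i j = SolPos.node n →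
      (n = b.exit i ∧ posAt cfg i (j+1) = SolPos.wait 0) ∨
      (∃ n', G.adj n n' ∧ posAt cfg i (j+1) = SolPos.node n') := by
    intro j n h hj
    rcases Pstep j h with ⟨h1, _⟩ | ⟨h1, _⟩ | ⟨k', h1, _⟩ | ⟨n', h1, h2⟩
    · rw [hj] at h1; simp at h1
    · rw [hj] at h1; simp at h1
    · rw [hj] at h1; simp at h1
    · rw [hj] at h1
      injection h1 with h'
      subst h'
      rcases h2 with ⟨he, h2⟩ | ⟨n'', ha, h2⟩
      · exact Or.inl ⟨he, h2⟩
      · exact Or.inr ⟨n'', ha, h2⟩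
  have hinit' : posAt cfg i 0 = initPos b i := by
    rw [posAt_eq cfg i 0 (Nat.zero_le _)]
    have h0e : (⟨0, by omega⟩ : Fin (len+1)) = 0 := by
      apply Fin.ext; simp
    rw [h0e, hinit]
  set A := b.arrival i with hAdef
  -- the waiting chain up to the arrival time
  have hw : ∀ j, j ≤ A → j ≤ len →
      (j < A → posAt cfg i j = SolPos.wait (A - j)) ∧
      (j = A → posAt cfg i j = SolPos.node (b.entry i)) := by
    intro j
    induction j with
    | zero =>
      intro _ _
      constructor
      · intro h0
        rw [hinit', initPos, if_neg (by omega)]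
        congr 1 <;> omega
      · intro h0
        rw [hinit', initPos, if_pos (by omega)]
    | succ j ih =>
      intro hjA hjlen
      have hj1 := ih (by omega) (by omega)
      have hjw : posAt cfg i j = SolPos.wait (A - j) := hj1.1 (by omega)
      constructor
      · intro hlt
        have h2 := FW2 j (A - j - 2) (by omega) (by rw [hjw]; congr 1; omega)
        rw [h2]; congr 1; omega
      · intro heq
        exact FW1 j (by omega) (by rw [hjw]; congr 1; omega)
  have hAlen : A ≤ len := by
    by_contra h
    have h1 := (hw len (by omega) le_rfl).1 (by omega)
    rw [hfin'] at h1
    injection h1 with h2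
    omega
  have hA : posAt cfg i A = SolPos.node (b.entry i) := (hw A le_rfl hAlen).2 rfl
  have hAlt : A < len := by
    rcases eq_or_lt_of_le hAlen with h | h
    · rw [h, hfin'] at hA; simp at hA
    · exact h
  have habs : ∀ j j', j ≤ j' → posAt cfg i j = SolPos.wait 0 → j' ≤ len →
      posAt cfg i j' = SolPos.wait 0 := by
    intro j j' hjj' h0
    induction j', hjj' using Nat.le_induction with
    | base => intro _; exact h0
    | succ n hn ih => intro hlen; exact FW0 n (by omega) (ih (by omega))
  -- the last time at which the soliton is at a node
  set r := Nat.findGreatest (fun j => ∃ n, posAt cfg i j = SolPos.node n) len with hrdef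
  have hAr : A ≤ r := by
    rw [hrdef]
    exact Nat.le_findGreatest hAlen ⟨_, hA⟩
  have hrlen : r ≤ len := by
    rw [hrdef]
    exact Nat.findGreatest_le len
  have hr_spec : ∃ n, posAt cfg i r = SolPos.node n := by
    rw [hrdef]
    exact Nat.findGreatest_spec
      (P := fun j => ∃ n, posAt cfg i j = SolPos.node n) hAlen ⟨_, hA⟩
  have hnotnode_hi : ∀ j p, r < j → posAt cfg i j ≠ SolPos.node p := by
    intro j p h1 hc
    by_cases h2 : j ≤ len
    · rw [hrdef] at h1
      exact Nat.findGreatest_is_greatest h1 h2 ⟨p, hc⟩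
    · rw [hfin2 j (by omega)] at hc; simp at hc
  have hnotnode_lo : ∀ j p, j < A → posAt cfg i j ≠ SolPos.node p := by
    intro j p h hc
    have h1 := (hw j (by omega) (by omega)).1 h
    rw [hc] at h1
    simp at h1
  have hrlt : r < len := by
    rcases eq_or_lt_of_le hrlen with h | h
    · obtain ⟨n, hn⟩ := hr_spec
      rw [h, hfin'] at hn; simp at hn
    · exact h
  have hr_exit : posAt cfg i r = SolPos.node (b.exit i) := by
    obtain ⟨n, hn⟩ := hr_spec
    rcases FN r n hrlt hn with ⟨he, _⟩ | ⟨n', _, hnode⟩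
    · rw [← he]; exact hn
    · exact absurd hnode (hnotnode_hi (r+1) n' (by omega))
  -- between arrival and r the soliton is at nodes
  have hmid : ∀ j, A ≤ j → j ≤ r → ∃ n, posAt cfg i j = SolPos.node n := by
    intro j hAj
    induction j, hAj using Nat.le_induction with
    | base => intro _; exact ⟨_, hA⟩
    | succ n hn ih =>
      intro hr
      obtain ⟨m, hm⟩ := ih (by omega)
      rcases FN n m (by omega) hm with ⟨_, h0⟩ | ⟨n', _, hnode⟩
      · exfalso
        have h1 := habs (n+1) r (by omega) h0 (by omega)
        rw [hr_exit] at h1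
        simp at h1
      · exact ⟨n', hnode⟩
  -- the node function
  set nf : ℕ → V := fun j =>
    match posAt cfg i j with
    | SolPos.node n => n
    | SolPos.wait _ => b.entry i
    with hnfdef
  have hnf : ∀ j, A ≤ j → j ≤ r → posAt cfg i j = SolPos.node (nf j) := by
    intro j h1 h2
    obtain ⟨n, hn⟩ := hmid j h1 h2
    have he : nf j = n := by
      simp only [hnfdef, hn]
    rw [he]
    exact hn
  have hnfA : nf A = b.entry i := by
    have h1 := hnf A le_rfl hAr
    rw [hA] at h1
    injection h1 with h2
    exact h2.symm
  have hnfr : nf r = b.exit i := by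
    have h1 := hnf r hAr le_rfl
    rw [hr_exit] at h1
    injection h1 with h2
    exact h2.symm
  have hadjn : ∀ j, A ≤ j → j + 1 ≤ r → G.adj (nf j) (nf (j+1)) := by
    intro j h1 h2
    rcases FN j (nf j) (by omega) (hnf j h1 (by omega)) with ⟨_, h0⟩ | ⟨n', ha, hnode⟩
    · exfalso
      have h3 := hnf (j+1) (by omega) h2
      rw [h0] at h3
      simp at h3
    · have h3 := hnf (j+1) (by omega) h2
      rw [hnode] at h3
      injection h3 with h4
      rw [← h4]
      exact ha
  have hnbn : ∀ j, A ≤ j → j + 2 ≤ r → nf (j+2) ≠ nf j := by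
    intro j h1 h2 heq
    have h4 := ((htwo j (by omega)) i).2.2.2
    have ha := hnf j h1 (by omega)
    have hc := hnf (j+2) (by omega) h2
    rw [posAt_eq cfg i j (by omega)] at ha
    rw [posAt_eq cfg i (j+2) (by omega)] at hc
    have h5 := h4 (by rw [hc]; simp)
    exact h5.2 (by rw [hc, ha, heq])
  -- injectivity of the trajectory
  have hinj : ∀ x y, A ≤ x → x ≤ r → A ≤ y → y ≤ r → nf x = nf y → x = y := by
    intro x y hx1 hx2 hy1 hy2 heq
    have h1 := nobacktrack_inj G htree.2 (fun d => nf (A + d)) (r - A)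
      (fun j hj => hadjn (A + j) (by omega) (by omega))
      (fun j hj => hnbn (A + j) (by omega) (by omega))
      (x - A) (y - A) (by omega) (by omega)
      (by
        show nf (A + (x - A)) = nf (A + (y - A))
        have e1 : A + (x - A) = x := by omega
        have e2 : A + (y - A) = y := by omega
        rw [e1, e2]
        exact heq)
    omega
  constructor
  · -- part 1: no node is visited twice
    intro j₁ j₂ p h1 h2
    have h1' : posAt cfg i ↑j₁ = SolPos.node p := by
      rw [posAt_eq cfg i ↑j₁ (by omega)]
      exact h1
    have h2' : posAt cfg i ↑j₂ = SolPos.node p := by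
      rw [posAt_eq cfg i ↑j₂ (by omega)]
      exact h2
    have hb1 : A ≤ (j₁ : ℕ) ∧ (j₁ : ℕ) ≤ r := by
      constructor
      · by_contra h; exact hnotnode_lo ↑j₁ p (by omega) h1'
      · by_contra h; exact hnotnode_hi ↑j₁ p (by omega) h1'
    have hb2 : A ≤ (j₂ : ℕ) ∧ (j₂ : ℕ) ≤ r := by
      constructor
      · by_contra h; exact hnotnode_lo ↑j₂ p (by omega) h2'
      · by_contra h; exact hnotnode_hi ↑j₂ p (by omega) h2'
    have e1 : nf ↑j₁ = p := by
      have h3 := hnf ↑j₁ hb1.1 hb1.2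
      rw [h1'] at h3
      injection h3 with h4
      exact h4.symm
    have e2 : nf ↑j₂ = p := by
      have h3 := hnf ↑j₂ hb2.1 hb2.2
      rw [h2'] at h3
      injection h3 with h4
      exact h4.symm
    exact Fin.ext (hinj ↑j₁ ↑j₂ hb1.1 hb1.2 hb2.1 hb2.2 (by rw [e1, e2]))
  · -- part 2: the trajectory is the given simple path
    intro k q hqinj hq0 hqlast hqadj
    set qn : ℕ → V := fun d => q ⟨min d k, by omega⟩ with hqndef
    have hqn_eq : ∀ (d : ℕ) (h : d ≤ k), qn d = q ⟨d, by omega⟩ := by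
      intro d h
      simp only [hqndef]
      congr 1
      apply Fin.ext
      simp
      omega
    have hiq : ∀ x y, x ≤ k → y ≤ k → qn x = qn y → x = y := by
      intro x y hx hy h
      rw [hqn_eq x hx, hqn_eq y hy] at h
      have h2 := hqinj h
      simpa using congrArg Fin.val h2
    have haq : ∀ j, j + 1 ≤ k → G.adj (qn j) (qn (j+1)) := by
      intro j hj
      rw [hqn_eq j (by omega), hqn_eq (j+1) hj]
      exact hqadj ⟨j, by omega⟩
    obtain ⟨hkeq, hvals⟩ := unique_simple_path G htree.2 (r - A) k
      (fun d => nf (A + d)) qn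
      (fun x y hx hy h => by
        have h2 := hinj (A + x) (A + y) (by omega) (by omega) (by omega) (by omega) h
        omega)
      hiq
      (fun j hj => hadjn (A + j) (by omega) (by omega))
      haq
      (by
        show nf (A + 0) = qn 0
        rw [hqn_eq 0 (Nat.zero_le _)]
        have e : A + 0 = A := by omega
        rw [e, hnfA, ← hq0]
        congr 1 <;> (apply Fin.ext; simp))
      (by
        show nf (A + (r - A)) = qn k
        have e : A + (r - A) = r := by omega
        rw [e, hnfr, hqn_eq k le_rfl, ← hqlast]
        congr 1 <;> (apply Fin.ext; simp [Fin.last]))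
    refine ⟨A, by omega, ?_, ?_⟩
    · intro j
      have hjk : (j : ℕ) ≤ k := by omega
      have h1 := hnf (A + ↑j) (by omega) (by omega)
      rw [posAt_eq cfg i (A + ↑j) (by omega)] at h1
      rw [h1]
      congr 1
      have h2 := hvals ↑j (by omega)
      rw [hqn_eq ↑j hjk] at h2
      rw [h2]
    · intro j hcond p hcp
      have hcp' : posAt cfg i ↑j = SolPos.node p := by
        rw [posAt_eq cfg i ↑j (by omega)]
        exact hcp
      rcases hcond with h | h
      · exact hnotnode_lo ↑j p (by omega) hcp'
      · exact hnotnode_hi ↑j p (by omega) hcp'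

end Soliton
end
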